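/- arXiv:1307.7304 — 9 statements merged into one kernel-verified Lean document; each statement's English description precedes it below -/
import Mathlib

section
/- Let A be a finite dimensional G-graded algebra and σ ∈ G. Then A(σ) ≅ A* as graded left A-modules if and only if (σ)A ≅ A* as graded right A-modules. -/
/-!
Both notions amount to a nondegenerate pairing `⟨x, y⟩ = φ x y` on `A` that is balanced on one
side and vanishes on `A_g × A_h` unless the product of the degrees (in the appropriate order)
is `σ`. Transposing the pairing, `⟨x, y⟩ ↦ ⟨y, x⟩`, exchanges left for right balance and
swaps the order of the degrees, so it turns one kind of isomorphism into the other; finite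
dimensionality makes the transpose again an isomorphism `A ≃ A*`.
-/

/-- The degree-`g` component of the dual of a `G`-graded module:
`(M*)_g = { f | f(M_h) = 0 for all h ≠ g⁻¹ }`. -/
def dualComponent {k M : Type*} [Field k] [AddCommGroup M] [Module k M]
    {G : Type*} [Group G] (ℳ : G → Submodule k M) (g : G) :
    Submodule k (Module.Dual k M) where
  carrier := {f | ∀ h : G, h ≠ g⁻¹ → ∀ x ∈ ℳ h, f x = 0}
  zero_mem' := by intro h hh x hx; rfl
  add_mem' := by
    intro f₁ f₂ h₁ h₂ h hh x hx
    simp [h₁ h hh x hx, h₂ h hh x hx]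
  smul_mem' := by
    intro c f hf h hh x hx
    simp [hf h hh x hx]

/-- `A` is `σ`-graded Frobenius: there is an isomorphism `A(σ) ≅ A*` of graded left
`A`-modules, where `A*` is a left `A`-module via `(a • f) y = f (y * a)` and is graded by
`(A*)_g = { f | f(A_h)=0 for h ≠ g⁻¹ }`, and `A(σ)_g = A_{gσ}`. -/
def IsSigmaGradedFrobenius {k A : Type*} [Field k] [Ring A] [Algebra k A]
    {G : Type*} [Group G] (𝒜 : G → Submodule k A) (σ : G) : Prop :=
  ∃ φ : A ≃ₗ[k] Module.Dual k A,
    (∀ a x y : A, φ (a * x) y = φ x (y * a)) ∧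
    ∀ g : G, ∀ x ∈ 𝒜 (g * σ), φ x ∈ dualComponent 𝒜 g

/-- `A` is right `σ`-graded Frobenius: there is an isomorphism `(σ)A ≅ A*` of graded right
`A`-modules, where `A*` is a right `A`-module via `(f • a) y = f (a * y)` and
`((σ)A)_g = A_{σg}`. -/
def IsSigmaGradedFrobeniusRight {k A : Type*} [Field k] [Ring A] [Algebra k A]
    {G : Type*} [Group G] (𝒜 : G → Submodule k A) (σ : G) : Prop :=
  ∃ ψ : A ≃ₗ[k] Module.Dual k A,
    (∀ a x y : A, ψ (x * a) y = ψ x (a * y)) ∧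
    ∀ g : G, ∀ x ∈ 𝒜 (σ * g), ψ x ∈ dualComponent 𝒜 g

open Module

section DualFlip

variable {k M : Type*} [Field k] [AddCommGroup M] [Module k M] [FiniteDimensional k M]

noncomputable def dualFlip (φ : M ≃ₗ[k] Dual k M) : M ≃ₗ[k] Dual k M :=
  (evalEquiv k M).trans φ.dualMap

@[simp]
theorem dualFlip_apply (φ : M ≃ₗ[k] Dual k M) (x y : M) : dualFlip φ x y = φ y x :=
  rfl

end DualFlip

section GradedPairing

variable {k M G : Type*} [Field k] [AddCommGroup M] [Module k M] [Group G]
  (ℳ : G → Submodule k M) (σ : G) (φ : M → Dual k M)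

theorem forall_mem_dualComponent_mul_right_iff :
    (∀ g, ∀ x ∈ ℳ (g * σ), φ x ∈ dualComponent ℳ g) ↔
      ∀ g h, ∀ x ∈ ℳ g, ∀ y ∈ ℳ h, h * g ≠ σ → φ x y = 0 := by
  constructor
  · intro hφ g h x hx y hy hne
    refine hφ (g * σ⁻¹) x (by simpa using hx) h ?_ y hy
    rintro rfl
    exact hne (by group)
  · intro hφ g x hx h hne y hy
    refine hφ (g * σ) h x hx y hy ?_
    intro e
    exact hne (eq_inv_of_mul_eq_one_left (by simpa [← mul_assoc] using e))

theorem forall_mem_dualComponent_mul_left_iff :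
    (∀ g, ∀ x ∈ ℳ (σ * g), φ x ∈ dualComponent ℳ g) ↔
      ∀ g h, ∀ x ∈ ℳ g, ∀ y ∈ ℳ h, g * h ≠ σ → φ x y = 0 := by
  constructor
  · intro hφ g h x hx y hy hne
    refine hφ (σ⁻¹ * g) x (by simpa using hx) h ?_ y hy
    rintro rfl
    exact hne (by group)
  · intro hφ g x hx h hne y hy
    refine hφ (σ * g) h x hx y hy ?_
    intro e
    exact hne (eq_inv_of_mul_eq_one_right (by simpa [mul_assoc] using e))

end GradedPairing

theorem sigmaGradedFrobenius_left_iff_right_general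
    {k A : Type*} [Field k] [Ring A] [Algebra k A] [FiniteDimensional k A]
    {G : Type*} [Group G]
    (𝒜 : G → Submodule k A)
    (σ : G) :
    IsSigmaGradedFrobenius 𝒜 σ ↔ IsSigmaGradedFrobeniusRight 𝒜 σ := by
  unfold IsSigmaGradedFrobenius IsSigmaGradedFrobeniusRight
  simp only [forall_mem_dualComponent_mul_right_iff, forall_mem_dualComponent_mul_left_iff]
  constructor
  · rintro ⟨φ, hφ, hgr⟩
    exact ⟨dualFlip φ, fun a x y ↦ by simp only [dualFlip_apply, hφ],
      fun g h x hx y hy hne ↦ by simpa only [dualFlip_apply] using hgr h g y hy x hx hne⟩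
  · rintro ⟨ψ, hψ, hgr⟩
    exact ⟨dualFlip ψ, fun a x y ↦ by simp only [dualFlip_apply, hψ],
      fun g h x hx y hy hne ↦ by simpa only [dualFlip_apply] using hgr h g y hy x hx hne⟩

/-- for a finite dimensional `G`-graded algebra `A` and `σ ∈ G`,
`A(σ) ≅ A*` as graded left `A`-modules iff `(σ)A ≅ A*` as graded right `A`-modules. -/
theorem sigmaGradedFrobenius_left_iff_right
    {k A : Type*} [Field k] [Ring A] [Algebra k A] [FiniteDimensional k A]
    {G : Type*} [Group G] [DecidableEq G]
    (𝒜 : G → Submodule k A)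
    (hinternal : DirectSum.IsInternal 𝒜)
    (hone : (1 : A) ∈ 𝒜 1)
    (hmul : ∀ {g h : G}, ∀ a ∈ 𝒜 g, ∀ b ∈ 𝒜 h, a * b ∈ 𝒜 (g * h))
    (σ : G) :
    IsSigmaGradedFrobenius 𝒜 σ ↔ IsSigmaGradedFrobeniusRight 𝒜 σ :=
  sigmaGradedFrobenius_left_iff_right_general 𝒜 σ
end

section
/- If A is a finite dimensional G-graded algebra which is σ-graded Frobenius and H is a subgroup of G containing σ, then the subalgebra A_H = ⊕_{g∈H} A_g is σ-graded Frobenius as an H-graded algebra. -/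
theorem gradedSub_mul_mem {k A : Type*} [Field k] [Ring A] [Algebra k A]
    {G : Type*} [Group G] (𝒜 : G → Submodule k A)
    (hmul : ∀ {g h : G}, ∀ a ∈ 𝒜 g, ∀ b ∈ 𝒜 h, a * b ∈ 𝒜 (g * h))
    (H : Subgroup G) {a b : A}
    (ha : a ∈ (⨆ h : H, 𝒜 (h : G) : Submodule k A))
    (hb : b ∈ (⨆ h : H, 𝒜 (h : G) : Submodule k A)) :
    a * b ∈ (⨆ h : H, 𝒜 (h : G) : Submodule k A) := by
  have key : ∀ (g : H), ∀ x ∈ 𝒜 (g : G),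
      x * b ∈ (⨆ h : H, 𝒜 (h : G) : Submodule k A) := by
    intro g x hx
    refine Submodule.iSup_induction (fun h : H => 𝒜 (h : G))
      (motive := fun y => x * y ∈ (⨆ h : H, 𝒜 (h : G) : Submodule k A)) hb ?_ ?_ ?_
    · intro h y hy
      exact Submodule.mem_iSup_of_mem (g * h) (hmul x hx y hy)
    · simp
    · intro y z hy hz
      simpa [mul_add] using add_mem hy hz
  refine Submodule.iSup_induction (fun h : H => 𝒜 (h : G))
    (motive := fun y => y * b ∈ (⨆ h : H, 𝒜 (h : G) : Submodule k A)) ha ?_ ?_ ?_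
  · intro g x hx
    exact key g x hx
  · simp
  · intro y z hy hz
    simpa [add_mul] using add_mem hy hz

theorem gradedSub_algebraMap_mem {k A : Type*} [Field k] [Ring A] [Algebra k A]
    {G : Type*} [Group G] (𝒜 : G → Submodule k A)
    (hone : (1 : A) ∈ 𝒜 1) (H : Subgroup G) (r : k) :
    algebraMap k A r ∈ (⨆ h : H, 𝒜 (h : G) : Submodule k A) := by
  have h1 : (1 : A) ∈ 𝒜 (((1 : H) : G)) := by
    rw [OneMemClass.coe_one]; exact hone
  rw [Algebra.algebraMap_eq_smul_one]
  exact Submodule.smul_mem _ r (Submodule.mem_iSup_of_mem (1 : H) h1)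

/-- The subalgebra `A_H = ⊕_{h ∈ H} A_h` of a `G`-graded algebra, for a subgroup `H ≤ G`. -/
def gradedSubalgebra {k A : Type*} [Field k] [Ring A] [Algebra k A]
    {G : Type*} [Group G] (𝒜 : G → Submodule k A)
    (hone : (1 : A) ∈ 𝒜 1)
    (hmul : ∀ {g h : G}, ∀ a ∈ 𝒜 g, ∀ b ∈ 𝒜 h, a * b ∈ 𝒜 (g * h))
    (H : Subgroup G) : Subalgebra k A where
  carrier := (⨆ h : H, 𝒜 (h : G) : Submodule k A)
  add_mem' := fun ha hb => add_mem ha hb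
  mul_mem' := fun ha hb => gradedSub_mul_mem 𝒜 hmul H ha hb
  algebraMap_mem' := fun r => gradedSub_algebraMap_mem 𝒜 hone H r

/-! Restricting the Frobenius form `φ` of `A` to `A_H` gives the Frobenius form of `A_H`. The
components `A_g` with `g ∉ H` are `φ`-orthogonal to `A_H`, because `φ(A_a, A_b) = 0` unless
`b * a = σ` and `σ ∈ H`; as they span a complement of `A_H`, the restricted form is still
nondegenerate. -/

theorem LinearMap.BilinForm.separatingLeft_restrict_of_sup_eq_top {R M : Type*} [CommRing R]
    [AddCommGroup M] [Module R M] {φ : LinearMap.BilinForm R M} (hφ : φ.SeparatingLeft)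
    {B C : Submodule R M} (hBC : B ⊔ C = ⊤) (hC : C ≤ φ.orthogonal B) :
    (φ.restrict B).SeparatingLeft := by
  intro x hx
  refine Subtype.ext (hφ x fun y => ?_)
  obtain ⟨b, hb, c, hc, rfl⟩ := Submodule.mem_sup.mp (hBC ▸ Submodule.mem_top : y ∈ B ⊔ C)
  rw [map_add, hC hc x x.2, add_zero]
  exact hx ⟨b, hb⟩

section GradedPairing

variable {k A G : Type*} [Field k] [Ring A] [Algebra k A] [Group G] {𝒜 : G → Submodule k A}
  {φ : A →ₗ[k] Module.Dual k A} {σ : G}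

theorem apply_eq_zero_of_mul_ne (hφ : ∀ g : G, ∀ x ∈ 𝒜 (g * σ), φ x ∈ dualComponent 𝒜 g)
    {a b : G} {x y : A} (hx : x ∈ 𝒜 a) (hy : y ∈ 𝒜 b) (hba : b * a ≠ σ) : φ x y = 0 := by
  refine hφ (a * σ⁻¹) x (by simpa using hx) b ?_ y hy
  rintro rfl
  exact hba (by group)

theorem iSup_notMem_le_orthogonal (hφ : ∀ g : G, ∀ x ∈ 𝒜 (g * σ), φ x ∈ dualComponent 𝒜 g)
    {H : Subgroup G} (hσ : σ ∈ H) :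
    ⨆ (g : G) (_ : g ∉ H), 𝒜 g ≤ LinearMap.BilinForm.orthogonal φ (⨆ h : H, 𝒜 (h : G)) := by
  refine iSup₂_le fun g hg y hy x hx => ?_
  refine (iSup_le fun h : H => fun z hz => ?_ : _ ≤ LinearMap.ker (φ.flip y)) hx
  refine apply_eq_zero_of_mul_ne hφ hz hy fun hgh => hg ?_
  rw [eq_mul_inv_of_mul_eq hgh]
  exact H.mul_mem hσ (H.inv_mem h.2)

end GradedPairing

/-- if a finite dimensional `G`-graded algebra `A` is `σ`-graded Frobenius
and `H` is a subgroup of `G` containing `σ`, then `A_H = ⊕_{g ∈ H} A_g` is `σ`-graded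
Frobenius as an `H`-graded algebra (graded by the components `A_h`, `h ∈ H`). -/
theorem gradedSubalgebra_sigmaGradedFrobenius
    {k A : Type*} [Field k] [Ring A] [Algebra k A] [FiniteDimensional k A]
    {G : Type*} [Group G] [DecidableEq G]
    (𝒜 : G → Submodule k A)
    (hinternal : DirectSum.IsInternal 𝒜)
    (hone : (1 : A) ∈ 𝒜 1)
    (hmul : ∀ {g h : G}, ∀ a ∈ 𝒜 g, ∀ b ∈ 𝒜 h, a * b ∈ 𝒜 (g * h))
    (σ : G) (H : Subgroup G) (hσ : σ ∈ H)
    (hFrob : IsSigmaGradedFrobenius 𝒜 σ) :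
    IsSigmaGradedFrobenius
      (fun h : H =>
        (𝒜 (h : G)).comap (gradedSubalgebra 𝒜 hone hmul H).val.toLinearMap)
      (⟨σ, hσ⟩ : H) := by
  obtain ⟨φ, hφ_assoc, hφ_graded⟩ := hFrob
  set B := gradedSubalgebra 𝒜 hone hmul H
  have hsup : Subalgebra.toSubmodule B ⊔ ⨆ (g : G) (_ : g ∉ H), 𝒜 g = ⊤ := by
    rw [← hinternal.submodule_iSup_eq_top, iSup_split 𝒜 (· ∈ H)]
    exact congrArg (· ⊔ _) (iSup_subtype (f := fun h : H => 𝒜 h))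
  have hψ :
      (LinearMap.BilinForm.restrict φ.toLinearMap (Subalgebra.toSubmodule B)).Nondegenerate :=
    .ofSeparatingLeft <| LinearMap.BilinForm.separatingLeft_restrict_of_sup_eq_top
      (LinearMap.separatingLeft_iff_ker_eq_bot.mpr φ.ker) hsup
      (iSup_notMem_le_orthogonal hφ_graded hσ)
  refine ⟨LinearMap.BilinForm.toDual _ hψ, fun a x y => hφ_assoc a x y, ?_⟩
  intro h x hx h' hh' y hy
  exact hφ_graded h x hx h' (fun he => hh' (Subtype.ext he)) y hy
end

section
/- Let A be a finite dimensional G-graded algebra that is σ-graded Frobenius, and let τ ∈ G. Then A is τ-graded Frobenius if and only if τ ∈ σ·G{A}, where G{A} = { g ∈ G | A(g) ≅ A as graded left A-modules } is the inertia group of A. -/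
theorem LinearEquiv.symm_mem_of_iSupIndep {ι R M N : Type*} [Ring R]
    [AddCommGroup M] [AddCommGroup N] [Module R M] [Module R N]
    (e : M ≃ₗ[R] N) {ℳ : ι → Submodule R M} {𝒩 : ι → Submodule R N}
    (hℳ : iSup ℳ = ⊤) (h𝒩 : iSupIndep 𝒩) (he : ∀ i, ∀ x ∈ ℳ i, e x ∈ 𝒩 i)
    {i : ι} {y : N} (hy : y ∈ 𝒩 i) : e.symm y ∈ ℳ i := by
  have hmem : e.symm y ∈ ℳ i ⊔ ⨆ (j) (_ : j ≠ i), ℳ j := by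
    rw [← iSup_split_single, hℳ]; trivial
  obtain ⟨x, hx, z, hz, hxz⟩ := Submodule.mem_sup.mp hmem
  have hez : e z ∈ ⨆ (j) (_ : j ≠ i), 𝒩 j := by
    have hmap : (⨆ (j) (_ : j ≠ i), ℳ j).map (e : M →ₗ[R] N) ≤ ⨆ (j) (_ : j ≠ i), 𝒩 j := by
      simp only [Submodule.map_iSup]
      exact iSup₂_mono fun j _ => Submodule.map_le_iff_le_comap.mpr fun x hx => he j x hx
    exact hmap ⟨z, hz, rfl⟩
  have hez' : e z ∈ 𝒩 i := by
    have : e z = y - e x := by rw [← e.apply_symm_apply y, ← hxz]; simp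
    rw [this]
    exact sub_mem hy (he i x hx)
  have hz0 : z = 0 := e.map_eq_zero_iff.mp <|
    (Submodule.disjoint_def.mp (iSupIndep_def.mp h𝒩 i)) _ hez' hez
  rw [← hxz, hz0, add_zero]
  exact hx

section DualComponent

variable {k M G : Type*} [Field k] [AddCommGroup M] [Module k M] [Group G]

theorem dualComponent_le_dualAnnihilator (ℳ : G → Submodule k M) {g h : G} (hgh : h ≠ g⁻¹) :
    dualComponent ℳ g ≤ (ℳ h).dualAnnihilator :=
  fun _ hf => (Submodule.mem_dualAnnihilator _).mpr (hf h hgh)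

theorem iSupIndep_dualComponent {ℳ : G → Submodule k M} (hℳ : iSup ℳ = ⊤) :
    iSupIndep (dualComponent ℳ) := by
  refine iSupIndep_def.mpr fun g => Submodule.disjoint_def.mpr fun f hf hf' => ?_
  have hvanish : f ∈ (ℳ g⁻¹).dualAnnihilator := by
    refine (iSup₂_le fun j hj => dualComponent_le_dualAnnihilator ℳ ?_) hf'
    simpa [inv_inj] using hj.symm
  have hker : ∀ h, ℳ h ≤ LinearMap.ker f := by
    intro h x hx
    by_cases hh : h = g⁻¹
    · subst hh; exact (Submodule.mem_dualAnnihilator f).mp hvanish x hx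
    · exact hf h hh x hx
  exact LinearMap.ker_eq_top.mp (top_le_iff.mp (hℳ ▸ iSup_le hker))

end DualComponent

namespace IsSigmaGradedFrobenius

variable {k A G : Type*} [Field k] [Ring A] [Algebra k A] [Group G] {𝒜 : G → Submodule k A}

theorem of_shiftIso {σ g : G} (hσ : IsSigmaGradedFrobenius 𝒜 σ) (ψ : A ≃ₗ[k] A)
    (hψmul : ∀ a x : A, ψ (a * x) = a * ψ x) (hψgr : ∀ g' : G, ∀ x ∈ 𝒜 (g' * g), ψ x ∈ 𝒜 g') :
    IsSigmaGradedFrobenius 𝒜 (σ * g) := by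
  obtain ⟨φ, hφmul, hφgr⟩ := hσ
  refine ⟨ψ.trans φ, fun a x y => ?_, fun g' x hx => ?_⟩
  · simpa only [LinearEquiv.trans_apply, hψmul] using hφmul a (ψ x) y
  · exact hφgr g' (ψ x) (hψgr (g' * σ) x (by rwa [mul_assoc]))

theorem exists_shiftIso (h𝒜 : iSup 𝒜 = ⊤) {σ τ : G} (hσ : IsSigmaGradedFrobenius 𝒜 σ)
    (hτ : IsSigmaGradedFrobenius 𝒜 τ) :
    ∃ ψ : A ≃ₗ[k] A, (∀ a x : A, ψ (a * x) = a * ψ x) ∧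
      ∀ g' : G, ∀ x ∈ 𝒜 (g' * (σ⁻¹ * τ)), ψ x ∈ 𝒜 g' := by
  obtain ⟨φ, hφmul, hφgr⟩ := hσ
  obtain ⟨φ', hφ'mul, hφ'gr⟩ := hτ
  have hshift : iSup (fun g => 𝒜 (g * σ)) = ⊤ := (Equiv.mulRight σ).surjective.iSup_comp 𝒜 ▸ h𝒜
  refine ⟨φ'.trans φ.symm, fun a x => φ.injective (LinearMap.ext fun y => ?_), fun g' x hx => ?_⟩
  · simp [hφmul, hφ'mul]
  · have hdeg := φ.symm_mem_of_iSupIndep hshift (iSupIndep_dualComponent h𝒜) hφgr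
      (hφ'gr (g' * σ⁻¹) x (by simpa [mul_assoc] using hx))
    simpa using hdeg

end IsSigmaGradedFrobenius

theorem tauGradedFrobenius_iff_mem_inertia_general
    {k A : Type*} [Field k] [Ring A] [Algebra k A]
    {G : Type*} [Group G] [DecidableEq G]
    (𝒜 : G → Submodule k A)
    (hinternal : DirectSum.IsInternal 𝒜)
    (σ τ : G)
    (hFrob : IsSigmaGradedFrobenius 𝒜 σ) :
    IsSigmaGradedFrobenius 𝒜 τ ↔
      ∃ g : G,
        (∃ ψ : A ≃ₗ[k] A,
          (∀ a x : A, ψ (a * x) = a * ψ x) ∧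
          (∀ g' : G, ∀ x ∈ 𝒜 (g' * g), ψ x ∈ 𝒜 g')) ∧
        τ = σ * g := by
  constructor
  · intro hτ
    exact ⟨σ⁻¹ * τ, hFrob.exists_shiftIso hinternal.submodule_iSup_eq_top hτ, by group⟩
  · rintro ⟨g, ⟨ψ, hψmul, hψgr⟩, rfl⟩
    exact hFrob.of_shiftIso ψ hψmul hψgr

/-- if a finite dimensional `G`-graded algebra `A` is `σ`-graded Frobenius
and `τ ∈ G`, then `A` is `τ`-graded Frobenius iff `τ ∈ σ·G{A}`, where
`G{A} = { g | A(g) ≅ A as graded left A-modules }` is the inertia group of `A`. -/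
theorem tauGradedFrobenius_iff_mem_inertia
    {k A : Type*} [Field k] [Ring A] [Algebra k A] [FiniteDimensional k A]
    {G : Type*} [Group G] [DecidableEq G]
    (𝒜 : G → Submodule k A)
    (hinternal : DirectSum.IsInternal 𝒜)
    (hone : (1 : A) ∈ 𝒜 1)
    (hmul : ∀ {g h : G}, ∀ a ∈ 𝒜 g, ∀ b ∈ 𝒜 h, a * b ∈ 𝒜 (g * h))
    (σ τ : G)
    (hFrob : IsSigmaGradedFrobenius 𝒜 σ) :
    IsSigmaGradedFrobenius 𝒜 τ ↔
      ∃ g : G,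
        (∃ ψ : A ≃ₗ[k] A,
          (∀ a x : A, ψ (a * x) = a * ψ x) ∧
          (∀ g' : G, ∀ x ∈ 𝒜 (g' * g), ψ x ∈ 𝒜 g')) ∧
        τ = σ * g :=
  tauGradedFrobenius_iff_mem_inertia_general 𝒜 hinternal σ τ hFrob
end

section
/- Let A be a G-graded algebra and H a normal subgroup of G. If A is graded Frobenius as a G-graded algebra, then A, equipped with the induced G/H-grading A_{ĝ} = ⊕_{g ∈ ĝ} A_g, is graded Frobenius as a G/H-graded algebra. -/
section Coarsen

variable {k M : Type*} [Field k] [AddCommGroup M] [Module k M]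
  {G Q : Type*} [Group G] [Group Q]

def coarsenGrading (π : G →* Q) (ℳ : G → Submodule k M) (q : Q) : Submodule k M :=
  ⨆ g ∈ {g : G | π g = q}, ℳ g

theorem dualComponent_le_dualComponent_coarsenGrading (π : G →* Q)
    (ℳ : G → Submodule k M) (g : G) :
    dualComponent ℳ g ≤ dualComponent (coarsenGrading π ℳ) (π g) := by
  intro f hf q hq
  have hker : coarsenGrading π ℳ q ≤ LinearMap.ker f := by
    refine iSup₂_le fun h (hh : π h = q) => fun x hx => hf h ?_ x hx
    rintro rfl
    exact hq (by rw [← hh, map_inv])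
  exact fun x hx => hker hx

end Coarsen

theorem IsSigmaGradedFrobenius.coarsen {k A : Type*} [Field k] [Ring A] [Algebra k A]
    {G Q : Type*} [Group G] [Group Q] {𝒜 : G → Submodule k A} {σ : G}
    (hFrob : IsSigmaGradedFrobenius 𝒜 σ) (π : G →* Q) :
    IsSigmaGradedFrobenius (coarsenGrading π 𝒜) (π σ) := by
  obtain ⟨φ, hmod, hgr⟩ := hFrob
  refine ⟨φ, hmod, fun q x hx => ?_⟩
  have hle : coarsenGrading π 𝒜 (q * π σ) ≤
      (dualComponent (coarsenGrading π 𝒜) q).comap φ.toLinearMap := by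
    refine iSup₂_le fun g (hg : π g = q * π σ) y hy => ?_
    have hφy : φ y ∈ dualComponent 𝒜 (g * σ⁻¹) := hgr _ y (by rwa [inv_mul_cancel_right])
    have hq : π (g * σ⁻¹) = q := by rw [map_mul, map_inv, hg, mul_inv_cancel_right]
    exact hq ▸ dualComponent_le_dualComponent_coarsenGrading π 𝒜 _ hφy
  exact hle hx

theorem quotientGrading_gradedFrobenius_general
    {k A : Type*} [Field k] [Ring A] [Algebra k A]
    {G : Type*} [Group G]
    (𝒜 : G → Submodule k A)
    (H : Subgroup G) [H.Normal]
    (hFrob : IsSigmaGradedFrobenius 𝒜 (1 : G)) :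
    IsSigmaGradedFrobenius
      (fun q : G ⧸ H => ⨆ g ∈ {g : G | (g : G ⧸ H) = q}, 𝒜 g)
      (1 : G ⧸ H) :=
  hFrob.coarsen (QuotientGroup.mk' H)

/-- if `A` is graded Frobenius as a `G`-graded algebra and `H` is a normal
subgroup of `G`, then `A` with the induced `G/H`-grading `A_ĝ = ⊕_{g ∈ ĝ} A_g` is
graded Frobenius as a `G/H`-graded algebra.  (Graded Frobenius = `1`-graded Frobenius,
i.e. `A ≅ A*` as graded left `A`-modules.) -/
theorem quotientGrading_gradedFrobenius
    {k A : Type*} [Field k] [Ring A] [Algebra k A] [FiniteDimensional k A]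
    {G : Type*} [Group G] [DecidableEq G]
    (𝒜 : G → Submodule k A)
    (hinternal : DirectSum.IsInternal 𝒜)
    (hone : (1 : A) ∈ 𝒜 1)
    (hmul : ∀ {g h : G}, ∀ a ∈ 𝒜 g, ∀ b ∈ 𝒜 h, a * b ∈ 𝒜 (g * h))
    (H : Subgroup G) [H.Normal]
    (hFrob : IsSigmaGradedFrobenius 𝒜 (1 : G)) :
    IsSigmaGradedFrobenius
      (fun q : G ⧸ H => ⨆ g ∈ {g : G | (g : G ⧸ H) = q}, 𝒜 g)
      (1 : G ⧸ H) :=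
  quotientGrading_gradedFrobenius_general 𝒜 H hFrob
end

section
/- A finite dimensional G-graded algebra A is σ-graded Frobenius if and only if there exists a non-degenerate associative bilinear form B : A × A → k such that B(r_τ, r_μ) = 0 for all homogeneous r_τ ∈ A_τ, r_μ ∈ A_μ with τμ ≠ σ. -/
/-!
A bilinear form `B` on `A` corresponds to the map `x ↦ B(·, x) : A → A*`. In finite dimension
`B` is non-degenerate exactly when this map is bijective; associativity of `B` is exactly
linearity of the map for the left action `(a • f) y = f (y a)` on `A*`; and `B` vanishes on
`A_τ × A_μ` for `τμ ≠ σ` exactly when the map sends `A_{gσ}` into `(A*)_g`, since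
`τ (g σ) = σ ↔ τ = g⁻¹`.
-/

theorem LinearMap.nondegenerate_iff_bijective {K V₁ V₂ : Type*} [Field K]
    [AddCommGroup V₁] [Module K V₁] [AddCommGroup V₂] [Module K V₂] [FiniteDimensional K V₁]
    {B : V₁ →ₗ[K] V₂ →ₗ[K] K} : B.Nondegenerate ↔ Function.Bijective B := by
  rw [Nondegenerate, separatingLeft_iff_ker_eq_bot, separatingRight_iff_flip_ker_eq_bot,
    ker_eq_bot, ker_eq_bot, flip_injective_iff₁, Function.Bijective]

theorem LinearMap.flip_map_mul_iff_assoc {R A : Type*} [CommSemiring R] [AddCommMonoid A]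
    [Mul A] [Module R A] (B : A →ₗ[R] A →ₗ[R] R) :
    (∀ a x y : A, B.flip (a * x) y = B.flip x (y * a)) ↔
      ∀ x y z : A, B (x * y) z = B x (y * z) :=
  ⟨fun h x y z => (h y z x).symm, fun h a x y => (h y a x).symm⟩

theorem mul_mul_eq_right_iff_eq_inv {G : Type*} [Group G] {h g σ : G} :
    h * (g * σ) = σ ↔ h = g⁻¹ := by
  rw [← mul_assoc, mul_eq_right, mul_eq_one_iff_eq_inv]

theorem LinearMap.flip_mem_dualComponent_iff {k M G : Type*} [Field k] [AddCommGroup M]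
    [Module k M] [Group G] (ℳ : G → Submodule k M) (σ : G) (B : M →ₗ[k] M →ₗ[k] k) :
    (∀ g : G, ∀ x ∈ ℳ (g * σ), B.flip x ∈ dualComponent ℳ g) ↔
      ∀ τ μ : G, τ * μ ≠ σ → ∀ x ∈ ℳ τ, ∀ y ∈ ℳ μ, B x y = 0 := by
  change (∀ g : G, ∀ x ∈ ℳ (g * σ), ∀ τ, τ ≠ g⁻¹ → ∀ z ∈ ℳ τ, B z x = 0) ↔ _
  refine ⟨fun h τ μ hτμ x hx y hy => ?_, fun h g x hx τ hτ z hz => ?_⟩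
  · refine h (μ * σ⁻¹) y (by simpa using hy) τ ?_ x hx
    rwa [ne_eq, ← mul_mul_eq_right_iff_eq_inv, inv_mul_cancel_right]
  · exact h τ (g * σ) (mt mul_mul_eq_right_iff_eq_inv.mp hτ) z hz x hx

theorem sigmaGradedFrobenius_iff_bilinearForm_general
    {k A : Type*} [Field k] [Ring A] [Algebra k A] [FiniteDimensional k A]
    {G : Type*} [Group G]
    (𝒜 : G → Submodule k A)
    (σ : G) :
    IsSigmaGradedFrobenius 𝒜 σ ↔
      ∃ B : A →ₗ[k] A →ₗ[k] k,
        (∀ x : A, (∀ y : A, B x y = 0) → x = 0) ∧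
        (∀ y : A, (∀ x : A, B x y = 0) → y = 0) ∧
        (∀ x y z : A, B (x * y) z = B x (y * z)) ∧
        (∀ τ μ : G, τ * μ ≠ σ → ∀ x ∈ 𝒜 τ, ∀ y ∈ 𝒜 μ, B x y = 0) := by
  constructor
  · rintro ⟨φ, hassoc, hgrade⟩
    have hB : (φ : A →ₗ[k] Module.Dual k A).flip.Nondegenerate :=
      LinearMap.flip_nondegenerate.mpr (LinearMap.nondegenerate_iff_bijective.mpr φ.bijective)
    exact ⟨_, hB.1, hB.2, (LinearMap.flip_map_mul_iff_assoc _).mp hassoc,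
      (LinearMap.flip_mem_dualComponent_iff 𝒜 σ _).mp hgrade⟩
  · rintro ⟨B, hleft, hright, hassoc, hgrade⟩
    have hφ : Function.Bijective B.flip :=
      LinearMap.nondegenerate_iff_bijective.mp (LinearMap.flip_nondegenerate.mpr ⟨hleft, hright⟩)
    exact ⟨.ofBijective B.flip hφ, (LinearMap.flip_map_mul_iff_assoc B).mpr hassoc,
      (LinearMap.flip_mem_dualComponent_iff 𝒜 σ B).mpr hgrade⟩

/-- a finite dimensional `G`-graded algebra `A` is `σ`-graded Frobenius iff
there is a non-degenerate associative bilinear form `B : A × A → k` with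
`B(r_τ, r_μ) = 0` for all homogeneous `r_τ ∈ A_τ`, `r_μ ∈ A_μ` with `τμ ≠ σ`. -/
theorem sigmaGradedFrobenius_iff_bilinearForm
    {k A : Type*} [Field k] [Ring A] [Algebra k A] [FiniteDimensional k A]
    {G : Type*} [Group G] [DecidableEq G]
    (𝒜 : G → Submodule k A)
    (hinternal : DirectSum.IsInternal 𝒜)
    (hone : (1 : A) ∈ 𝒜 1)
    (hmul : ∀ {g h : G}, ∀ a ∈ 𝒜 g, ∀ b ∈ 𝒜 h, a * b ∈ 𝒜 (g * h))
    (σ : G) :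
    IsSigmaGradedFrobenius 𝒜 σ ↔
      ∃ B : A →ₗ[k] A →ₗ[k] k,
        (∀ x : A, (∀ y : A, B x y = 0) → x = 0) ∧
        (∀ y : A, (∀ x : A, B x y = 0) → y = 0) ∧
        (∀ x y z : A, B (x * y) z = B x (y * z)) ∧
        (∀ τ μ : G, τ * μ ≠ σ → ∀ x ∈ 𝒜 τ, ∀ y ∈ 𝒜 μ, B x y = 0) :=
  sigmaGradedFrobenius_iff_bilinearForm_general 𝒜 σ
end

section
/- Let A be a finite dimensional strongly G-graded algebra. Then A is graded Frobenius if and only if A_e is a Frobenius algebra. -/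
/-!
A graded Frobenius isomorphism `φ : A ≅ A*` sends `A_e` into `(A*)_e`, the functionals supported
on `A_e`, so its restriction `A_e → (A_e)*` is injective, hence bijective.
Conversely, a Frobenius isomorphism `θ` of `A_e` is determined by the functional `f = θ 1`, and
`x ↦ (y ↦ f ((y x)_e))` is a graded module map `A → A*`. Strong grading makes it injective:
if `f ((y x)_e) = 0` for all `y`, then `(A x)_e = 0`, so `A_{g⁻¹} x_g = 0` for every `g`, and
`x_g ∈ A_g A_{g⁻¹} x_g = 0`.
-/

open DirectSum

theorem eq_zero_of_one_mem_mul_of_forall_mul_eq_zero {R A : Type*} [CommSemiring R] [Semiring A]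
    [Algebra R A] {I J : Submodule R A} (h1 : (1 : A) ∈ I * J) {x : A}
    (hx : ∀ y ∈ J, y * x = 0) : x = 0 := by
  have hIJ : ∀ z ∈ I * J, z * x = 0 := fun z hz =>
    Submodule.mul_induction_on hz (fun a _ b hb => by rw [mul_assoc, hx b hb, mul_zero])
      (fun _ _ h h' => by rw [add_mul, h, h', add_zero])
  simpa using hIJ 1 h1

section Decomposition

variable {R A G : Type*} [CommSemiring R] [Semiring A] [Algebra R A] [Group G] [DecidableEq G]
  (𝒜 : G → Submodule R A) [Decomposition 𝒜]

theorem coe_decompose_mul_mul_of_left_mem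
    (hmul : ∀ {g h : G}, ∀ a ∈ 𝒜 g, ∀ b ∈ 𝒜 h, a * b ∈ 𝒜 (g * h))
    {a : A} {c : G} (ha : a ∈ 𝒜 c) (b : A) (g : G) :
    (decompose 𝒜 (a * b) (c * g) : A) = a * decompose 𝒜 b g := by
  induction b using Decomposition.inductionOn 𝒜 with
  | zero => simp
  | @homogeneous h m =>
    by_cases hg : h = g
    · subst hg
      rw [decompose_of_mem_same 𝒜 (hmul a ha m m.2), decompose_of_mem_same 𝒜 m.2]
    · rw [decompose_of_mem_ne 𝒜 (hmul a ha m m.2) (by simpa using hg),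
        decompose_of_mem_ne 𝒜 m.2 hg, mul_zero]
  | add b b' hb hb' => simp [mul_add, decompose_add, hb, hb']

def projOne : A →ₗ[R] 𝒜 1 :=
  component R G (fun g => 𝒜 g) 1 ∘ₗ (decomposeLinearEquiv 𝒜).toLinearMap

theorem projOne_apply (x : A) : projOne 𝒜 x = decompose 𝒜 x 1 := rfl

variable {𝒜}

theorem projOne_of_mem_one {x : A} (hx : x ∈ 𝒜 1) : projOne 𝒜 x = ⟨x, hx⟩ :=
  Subtype.ext (decompose_of_mem_same 𝒜 hx)

theorem projOne_of_mem_ne {x : A} {g : G} (hx : x ∈ 𝒜 g) (hg : g ≠ 1) : projOne 𝒜 x = 0 :=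
  Subtype.ext (decompose_of_mem_ne 𝒜 hx hg)

theorem coe_projOne_mul_of_left_mem
    (hmul : ∀ {g h : G}, ∀ a ∈ 𝒜 g, ∀ b ∈ 𝒜 h, a * b ∈ 𝒜 (g * h))
    {a : A} {c : G} (ha : a ∈ 𝒜 c⁻¹) (b : A) :
    (projOne 𝒜 (a * b) : A) = a * decompose 𝒜 b c := by
  rw [projOne_apply, ← coe_decompose_mul_mul_of_left_mem 𝒜 hmul ha, inv_mul_cancel]

theorem projOne_mul_projOne
    (hmul : ∀ {g h : G}, ∀ a ∈ 𝒜 g, ∀ b ∈ 𝒜 h, a * b ∈ 𝒜 (g * h))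
    {a : A} (ha : a ∈ 𝒜 1) (b : A) :
    projOne 𝒜 (a * projOne 𝒜 b) = projOne 𝒜 (a * b) := by
  have ha' : a ∈ 𝒜 1⁻¹ := by rwa [inv_one]
  apply Subtype.ext
  rw [coe_projOne_mul_of_left_mem hmul ha', coe_projOne_mul_of_left_mem hmul ha',
    decompose_coe, of_eq_same, projOne_apply]

theorem eq_zero_of_forall_projOne_mul_eq_zero (h1 : ∀ g : G, (1 : A) ∈ 𝒜 g * 𝒜 g⁻¹)
    (hmul : ∀ {g h : G}, ∀ a ∈ 𝒜 g, ∀ b ∈ 𝒜 h, a * b ∈ 𝒜 (g * h))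
    {x : A} (hx : ∀ y : A, projOne 𝒜 (y * x) = 0) : x = 0 := by
  refine (decompose 𝒜).injective (DFinsupp.ext fun g => Subtype.ext ?_)
  rw [decompose_zero, DirectSum.zero_apply, ZeroMemClass.coe_zero]
  refine eq_zero_of_one_mem_mul_of_forall_mul_eq_zero (h1 g) fun y hy => ?_
  rw [← coe_projOne_mul_of_left_mem hmul hy, hx, ZeroMemClass.coe_zero]

end Decomposition

section Dual

variable {k A G : Type*} [Field k] [Ring A] [Algebra k A] [Group G] [DecidableEq G]
  {𝒜 : G → Submodule k A} [Decomposition 𝒜]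

theorem eq_zero_of_mem_dualComponent {F : Module.Dual k A} {g : G}
    (hF : F ∈ dualComponent 𝒜 g) (h : ∀ x ∈ 𝒜 g⁻¹, F x = 0) : F = 0 := by
  refine decompose_lhom_ext 𝒜 fun c => LinearMap.ext fun ⟨x, hx⟩ => ?_
  by_cases hc : c = g⁻¹
  · subst hc
    exact h x hx
  · exact hF c hc x hx

theorem domRestrict₁₂_one_injective {φ : A →ₗ[k] Module.Dual k A} (hφ : Function.Injective φ)
    (hgr : ∀ x ∈ 𝒜 1, φ x ∈ dualComponent 𝒜 1) :
    Function.Injective (φ.domRestrict₁₂ (𝒜 1) (𝒜 1)) := by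
  rw [injective_iff_map_eq_zero]
  intro x hx
  have hφx : φ x = 0 :=
    eq_zero_of_mem_dualComponent (hgr x x.2) fun y hy => by
      rw [inv_one] at hy
      exact LinearMap.congr_fun hx ⟨y, hy⟩
  exact Subtype.ext (hφ (hφx.trans (map_zero φ).symm))

variable (𝒜)

def dualOfProjOne (f : Module.Dual k (𝒜 1)) : A →ₗ[k] Module.Dual k A :=
  (LinearMap.mul k A).flip.compr₂ (f ∘ₗ projOne 𝒜)

variable {𝒜}

theorem dualOfProjOne_apply (f : Module.Dual k (𝒜 1)) (x y : A) :
    dualOfProjOne 𝒜 f x y = f (projOne 𝒜 (y * x)) := rfl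

theorem dualOfProjOne_mul_apply (f : Module.Dual k (𝒜 1)) (a x y : A) :
    dualOfProjOne 𝒜 f (a * x) y = dualOfProjOne 𝒜 f x (y * a) := by
  simp only [dualOfProjOne_apply, mul_assoc]

theorem dualOfProjOne_mem_dualComponent
    (hmul : ∀ {g h : G}, ∀ a ∈ 𝒜 g, ∀ b ∈ 𝒜 h, a * b ∈ 𝒜 (g * h))
    (f : Module.Dual k (𝒜 1)) {g : G} {x : A} (hx : x ∈ 𝒜 g) :
    dualOfProjOne 𝒜 f x ∈ dualComponent 𝒜 g := by
  intro h hh y hy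
  have hhg : h * g ≠ 1 := fun hc => hh (eq_inv_of_mul_eq_one_left hc)
  rw [dualOfProjOne_apply, projOne_of_mem_ne (hmul y hy x hx) hhg, map_zero]

theorem dualOfProjOne_injective (h1 : ∀ g : G, (1 : A) ∈ 𝒜 g * 𝒜 g⁻¹)
    (hmul : ∀ {g h : G}, ∀ a ∈ 𝒜 g, ∀ b ∈ 𝒜 h, a * b ∈ 𝒜 (g * h))
    {f : Module.Dual k (𝒜 1)}
    (hf : ∀ z ∈ 𝒜 1, (∀ w ∈ 𝒜 1, f (projOne 𝒜 (w * z)) = 0) → z = 0) :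
    Function.Injective (dualOfProjOne 𝒜 f) := by
  rw [injective_iff_map_eq_zero]
  intro x hx
  refine eq_zero_of_forall_projOne_mul_eq_zero h1 hmul fun y => Subtype.ext ?_
  refine hf _ (projOne 𝒜 (y * x)).2 fun w hw => ?_
  rw [projOne_mul_projOne hmul hw, ← mul_assoc, ← dualOfProjOne_apply, hx, LinearMap.zero_apply]

end Dual

/-- a finite dimensional strongly `G`-graded algebra `A` is graded
Frobenius iff the identity component `A_e` is a Frobenius algebra, i.e. `A_e ≅ (A_e)*`
as left `A_e`-modules (the left `A_e`-action on the dual being `(a • f) y = f (y * a)`). -/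
theorem stronglyGraded_gradedFrobenius_iff
    {k A : Type*} [Field k] [Ring A] [Algebra k A] [FiniteDimensional k A]
    {G : Type*} [Group G] [DecidableEq G]
    (𝒜 : G → Submodule k A)
    (hinternal : DirectSum.IsInternal 𝒜)
    (hone : (1 : A) ∈ 𝒜 1)
    (hmul : ∀ {g h : G}, ∀ a ∈ 𝒜 g, ∀ b ∈ 𝒜 h, a * b ∈ 𝒜 (g * h))
    (hstrong : ∀ g h : G, 𝒜 g * 𝒜 h = 𝒜 (g * h)) :
    IsSigmaGradedFrobenius 𝒜 (1 : G) ↔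
      ∃ θ : ↥(𝒜 1) ≃ₗ[k] Module.Dual k ↥(𝒜 1),
        ∀ a x y : ↥(𝒜 1),
          θ ⟨(a : A) * (x : A), by simpa using hmul (a : A) a.2 (x : A) x.2⟩ y =
          θ x ⟨(y : A) * (a : A), by simpa using hmul (y : A) y.2 (a : A) a.2⟩ := by
  let := hinternal.chooseDecomposition
  constructor
  · rintro ⟨φ, hφ, hgr⟩
    have hinj := domRestrict₁₂_one_injective (𝒜 := 𝒜) φ.injective fun x hx => by
      simpa using hgr 1 x (by simpa using hx)
    exact ⟨LinearMap.linearEquivOfInjective _ hinj Subspace.dual_finrank_eq.symm,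
      fun a x y => hφ a x y⟩
  · rintro ⟨θ, hθ⟩
    have h1 : ∀ g : G, (1 : A) ∈ 𝒜 g * 𝒜 g⁻¹ := fun g => by
      rwa [hstrong, mul_inv_cancel]
    -- `θ` is determined by the functional `θ 1`: `θ z w = θ 1 (w * z)`.
    have hf : ∀ z ∈ 𝒜 1, (∀ w ∈ 𝒜 1, θ ⟨1, hone⟩ (projOne 𝒜 (w * z)) = 0) → z = 0 := by
      intro z hz hzw
      have hθz : θ ⟨z, hz⟩ = 0 := LinearMap.ext fun w => by
        have hθzw := hθ ⟨z, hz⟩ ⟨1, hone⟩ w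
        simp only [mul_one] at hθzw
        have hwz : (w : A) * z ∈ 𝒜 1 := by simpa using hmul _ w.2 z hz
        rw [hθzw, ← projOne_of_mem_one hwz, hzw w w.2, LinearMap.zero_apply]
      simpa using θ.map_eq_zero_iff.mp hθz
    refine ⟨LinearMap.linearEquivOfInjective _ (dualOfProjOne_injective h1 hmul hf)
      Subspace.dual_finrank_eq.symm, dualOfProjOne_mul_apply _,
      fun g x hx => dualOfProjOne_mem_dualComponent hmul _ (by simpa using hx)⟩
end

section
/- Let A be a finite dimensional G-graded algebra and σ ∈ G. Then A is σ-graded Frobenius if and only if A_σ ≅ (A_e)* as left A_e-modules and A is left σ-faithful, i.e. for every g ∈ G and nonzero a_g ∈ A_g one has A_{σ g⁻¹} a_g ≠ 0. -/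
/-! A σ-graded Frobenius isomorphism `φ : A ≃ A*` maps each `A_{gσ}` into `(A*)_g`; since these
components of `A*` are independent and the images span, it maps `A_{gσ}` onto `(A*)_g`, which
restriction identifies with `(A_{g⁻¹})*`. At `g = e` this gives `A_σ ≅ (A_e)*`, and faithfulness is
the nondegeneracy of `(b, a) ↦ φ a b = φ (b * a) 1` on `A_{σg⁻¹} × A_g`.

Conversely, `x ↦ θ x 1` on `A_σ`, extended by zero on the other components, is a linear form `τ`
with `τ ∈ (A*)_{σ⁻¹}`; then `x ↦ (y ↦ τ (y * x))` is graded of degree `σ` and, by faithfulness,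
injective, hence bijective by dimension count. -/

open DirectSum

section GradedDual

variable {k M G : Type*} [Field k] [AddCommGroup M] [Module k M] [DecidableEq G]
  (ℳ : G → Submodule k M) [Decomposition ℳ]

noncomputable def gradedProj (g : G) : M →ₗ[k] ℳ g :=
  component k G (fun g => ℳ g) g ∘ₗ (decomposeLinearEquiv ℳ).toLinearMap

@[simp]
lemma gradedProj_apply (g : G) (x : M) : gradedProj ℳ g x = decompose ℳ x g := rfl

variable [Group G]

lemma disjoint_dualComponent_dualAnnihilator (g : G) :
    Disjoint (dualComponent ℳ g⁻¹) (ℳ g).dualAnnihilator := by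
  refine Submodule.disjoint_def.2 fun f hf hf' => decompose_lhom_ext ℳ fun h => ?_
  ext ⟨x, hx⟩
  by_cases hh : h = g
  · subst hh
    exact (Submodule.mem_dualAnnihilator _).1 hf' x hx
  · exact hf h (by rwa [inv_inv]) x hx

lemma iSupIndep_dualComponent_s9 : iSupIndep (dualComponent ℳ) := by
  intro g
  have hle : ⨆ (j) (_ : j ≠ g), dualComponent ℳ j ≤ (ℳ g⁻¹).dualAnnihilator :=
    iSup₂_le fun j hj f hf =>
      (Submodule.mem_dualAnnihilator _).2 (hf _ (inv_injective.ne hj.symm))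
  simpa using (disjoint_dualComponent_dualAnnihilator ℳ g⁻¹).mono_right hle

noncomputable def dualComponentEquiv (g : G) :
    dualComponent ℳ g⁻¹ ≃ₗ[k] Module.Dual k (ℳ g) :=
  LinearEquiv.ofBijective ((ℳ g).subtype.dualMap ∘ₗ (dualComponent ℳ g⁻¹).subtype) <| by
    refine ⟨(injective_iff_map_eq_zero _).2 fun f hf => Subtype.ext ?_, fun f => ?_⟩
    · refine Submodule.disjoint_def.1 (disjoint_dualComponent_dualAnnihilator ℳ g) f f.2 ?_
      exact (Submodule.mem_dualAnnihilator _).2 fun x hx => DFunLike.congr_fun hf ⟨x, hx⟩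
    · refine ⟨⟨f ∘ₗ gradedProj ℳ g, fun h hh x hx => ?_⟩, ?_⟩
      · have : decompose ℳ x g = 0 := Subtype.ext (decompose_of_mem_ne ℳ hx (by simpa using hh))
        simp [this]
      · ext x
        simp [decompose_coe]

lemma map_eq_dualComponent (φ : M ≃ₗ[k] Module.Dual k M) {σ : G}
    (hφ : ∀ g, ∀ x ∈ ℳ (g * σ), φ x ∈ dualComponent ℳ g) (g : G) :
    (ℳ (g * σ)).map (φ : M →ₗ[k] Module.Dual k M) = dualComponent ℳ g := by
  have hle : (fun g => (ℳ (g * σ)).map (φ : M →ₗ[k] Module.Dual k M)) ≤ dualComponent ℳ :=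
    fun g => Submodule.map_le_iff_le_comap.2 (hφ g)
  have htop : ⨆ g, (ℳ (g * σ)).map (φ : M →ₗ[k] Module.Dual k M) = ⊤ := by
    have hshift : ⨆ g, ℳ (g * σ) = ⨆ g, ℳ g := (Equiv.mulRight σ).iSup_comp (g := ℳ)
    rw [← Submodule.map_iSup, hshift,
      (Decomposition.isInternal ℳ).submodule_iSup_eq_top, Submodule.map_top, LinearEquiv.range]
  exact congrFun (((iSupIndep_dualComponent_s9 ℳ).le_iff_eq_of_iSup_eq_top htop).1 hle) g

end GradedDual

def IsLeftSigmaFaithful {k A G : Type*} [Field k] [Ring A] [Algebra k A] [Group G]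
    (𝒜 : G → Submodule k A) (σ : G) : Prop :=
  ∀ g : G, ∀ a ∈ 𝒜 g, a ≠ 0 → ∃ b ∈ 𝒜 (σ * g⁻¹), b * a ≠ 0

lemma bijective_mul_flip_compr₂ {k A : Type*} [Field k] [Ring A] [Algebra k A]
    [FiniteDimensional k A] (τ : Module.Dual k A) (hτ : ∀ x ≠ 0, ∃ y, τ (y * x) ≠ 0) :
    Function.Bijective ((LinearMap.mul k A).flip.compr₂ τ) := by
  have hinj : Function.Injective ((LinearMap.mul k A).flip.compr₂ τ) := by
    refine (injective_iff_map_eq_zero _).2 fun x hx => ?_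
    by_contra hx0
    obtain ⟨y, hy⟩ := hτ x hx0
    exact hy (DFunLike.congr_fun hx y)
  exact ⟨hinj, (LinearMap.injective_iff_surjective_of_finrank_eq_finrank
    Subspace.dual_finrank_eq.symm).1 hinj⟩

section GradedAlgebra

variable {k A G : Type*} [Field k] [Ring A] [Algebra k A] [Group G] {𝒜 : G → Submodule k A}

lemma apply_mul_eq_zero_of_mem_dualComponent
    (hmul : ∀ {g h : G}, ∀ a ∈ 𝒜 g, ∀ b ∈ 𝒜 h, a * b ∈ 𝒜 (g * h))
    {τ : Module.Dual k A} {σ : G} (hτ : τ ∈ dualComponent 𝒜 σ⁻¹)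
    {g h : G} {y x : A} (hy : y ∈ 𝒜 h) (hx : x ∈ 𝒜 g) (hhg : h * g ≠ σ) : τ (y * x) = 0 :=
  hτ _ (by rwa [inv_inv]) _ (hmul y hy x hx)

theorem isSigmaGradedFrobenius_of_mem_dualComponent [FiniteDimensional k A]
    (hmul : ∀ {g h : G}, ∀ a ∈ 𝒜 g, ∀ b ∈ 𝒜 h, a * b ∈ 𝒜 (g * h))
    {τ : Module.Dual k A} {σ : G} (hτ : τ ∈ dualComponent 𝒜 σ⁻¹)
    (hnd : ∀ x ≠ 0, ∃ y, τ (y * x) ≠ 0) : IsSigmaGradedFrobenius 𝒜 σ := by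
  refine ⟨.ofBijective _ (bijective_mul_flip_compr₂ τ hnd), fun a x y => ?_,
    fun g x hx h hh y hy => ?_⟩
  · simp [mul_assoc]
  · refine apply_mul_eq_zero_of_mem_dualComponent hmul hτ hy hx fun h' => hh ?_
    rw [eq_inv_iff_mul_eq_one, ← mul_right_cancel_iff (a := σ)]
    simpa [mul_assoc] using h'

variable [DecidableEq G] [Decomposition 𝒜]

lemma apply_mul_decompose_of_mem_dualComponent
    (hmul : ∀ {g h : G}, ∀ a ∈ 𝒜 g, ∀ b ∈ 𝒜 h, a * b ∈ 𝒜 (g * h))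
    {τ : Module.Dual k A} {σ : G} (hτ : τ ∈ dualComponent 𝒜 σ⁻¹)
    {g h : G} {y : A} (hy : y ∈ 𝒜 h) (hhg : h * g = σ) (x : A) :
    τ (y * decompose 𝒜 x g) = τ (y * x) := by
  have := decompose_lhom_ext 𝒜 (f := τ ∘ₗ LinearMap.mulLeft k y ∘ₗ (𝒜 g).subtype ∘ₗ gradedProj 𝒜 g)
    (g := τ ∘ₗ LinearMap.mulLeft k y) fun j => ?_
  · exact DFunLike.congr_fun this x
  ext ⟨x, hx⟩
  by_cases hj : j = g
  · subst hj
    simp [decompose_of_mem_same 𝒜 hx]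
  · simp [decompose_of_mem_ne 𝒜 hx hj,
      apply_mul_eq_zero_of_mem_dualComponent hmul hτ hy hx (fun h' => hj (by simpa [← hhg] using h'))]

lemma exists_apply_mul_ne_zero
    (hmul : ∀ {g h : G}, ∀ a ∈ 𝒜 g, ∀ b ∈ 𝒜 h, a * b ∈ 𝒜 (g * h))
    {τ : Module.Dual k A} {σ : G} (hτ : τ ∈ dualComponent 𝒜 σ⁻¹)
    (hfaith : IsLeftSigmaFaithful 𝒜 σ) (hσ : ∀ z ∈ 𝒜 σ, z ≠ 0 → ∃ c ∈ 𝒜 1, τ (c * z) ≠ 0)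
    {x : A} (hx : x ≠ 0) : ∃ y, τ (y * x) ≠ 0 := by
  obtain ⟨g, hg⟩ : ∃ g, (decompose 𝒜 x g : A) ≠ 0 := by
    by_contra! h
    exact hx ((decompose 𝒜).injective (by ext g; simp [h]))
  obtain ⟨b, hb, hbx⟩ := hfaith g _ (decompose 𝒜 x g).2 hg
  obtain ⟨c, hc, hcbx⟩ := hσ _ (by simpa using hmul b hb _ (decompose 𝒜 x g).2) hbx
  refine ⟨c * b, ?_⟩
  rwa [← apply_mul_decompose_of_mem_dualComponent hmul hτ (hmul c hc b hb) (g := g) (by group),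
    mul_assoc]

theorem isSigmaGradedFrobenius_of_equiv_dual_one [FiniteDimensional k A] (hone : (1 : A) ∈ 𝒜 1)
    (hmul : ∀ {g h : G}, ∀ a ∈ 𝒜 g, ∀ b ∈ 𝒜 h, a * b ∈ 𝒜 (g * h)) {σ : G}
    (θ : ↥(𝒜 σ) ≃ₗ[k] Module.Dual k ↥(𝒜 1))
    (hθ : ∀ (a : ↥(𝒜 1)) (x : ↥(𝒜 σ)) (b : ↥(𝒜 1)),
      θ ⟨(a : A) * (x : A), by simpa using hmul (a : A) a.2 (x : A) x.2⟩ b =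
      θ x ⟨(b : A) * (a : A), by simpa using hmul (b : A) b.2 (a : A) a.2⟩)
    (hfaith : IsLeftSigmaFaithful 𝒜 σ) : IsSigmaGradedFrobenius 𝒜 σ := by
  set τ := (dualComponentEquiv 𝒜 σ).symm (Module.Dual.eval k _ ⟨1, hone⟩ ∘ₗ θ.toLinearMap)
  have hτ (z : A) (hz : z ∈ 𝒜 σ) : (τ : Module.Dual k A) z = θ ⟨z, hz⟩ ⟨1, hone⟩ := by
    exact DFunLike.congr_fun ((dualComponentEquiv 𝒜 σ).apply_symm_apply _) ⟨z, hz⟩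
  refine isSigmaGradedFrobenius_of_mem_dualComponent hmul τ.2 fun x hx =>
    exists_apply_mul_ne_zero hmul τ.2 hfaith (fun z hz hz0 => ?_) hx
  obtain ⟨c, hc⟩ : ∃ c, θ ⟨z, hz⟩ c ≠ 0 := by
    by_contra! h
    exact hz0 (congrArg Subtype.val (θ.map_eq_zero_iff.1 (LinearMap.ext h)))
  have hcz : (c : A) * z ∈ 𝒜 σ := by simpa using hmul _ c.2 _ hz
  have hθc : θ ⟨c * z, hcz⟩ ⟨1, hone⟩ = θ ⟨z, hz⟩ c :=
    (hθ c ⟨z, hz⟩ ⟨1, hone⟩).trans (congrArg _ (Subtype.ext (one_mul _)))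
  exact ⟨c, c.2, by rwa [hτ _ hcz, hθc]⟩

theorem IsSigmaGradedFrobenius.exists_equiv_dual_one {σ : G} (h : IsSigmaGradedFrobenius 𝒜 σ)
    (hmul : ∀ {g h : G}, ∀ a ∈ 𝒜 g, ∀ b ∈ 𝒜 h, a * b ∈ 𝒜 (g * h)) :
    ∃ θ : ↥(𝒜 σ) ≃ₗ[k] Module.Dual k ↥(𝒜 1),
      ∀ (a : ↥(𝒜 1)) (x : ↥(𝒜 σ)) (b : ↥(𝒜 1)),
        θ ⟨(a : A) * (x : A), by simpa using hmul (a : A) a.2 (x : A) x.2⟩ b =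
        θ x ⟨(b : A) * (a : A), by simpa using hmul (b : A) b.2 (a : A) a.2⟩ := by
  obtain ⟨φ, hmod, hgr⟩ := h
  have hσ : (𝒜 σ).map (φ : A →ₗ[k] Module.Dual k A) = dualComponent 𝒜 1⁻¹ := by
    simpa using map_eq_dualComponent 𝒜 φ hgr 1⁻¹
  exact ⟨(φ.ofSubmodules _ _ hσ).trans (dualComponentEquiv 𝒜 1), fun a x b => hmod a x b⟩

theorem IsSigmaGradedFrobenius.isLeftSigmaFaithful {σ : G} (h : IsSigmaGradedFrobenius 𝒜 σ) :
    IsLeftSigmaFaithful 𝒜 σ := by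
  obtain ⟨φ, hmod, hgr⟩ := h
  intro g a ha ha0
  have hφa : φ a ∈ dualComponent 𝒜 (σ * g⁻¹)⁻¹ := hgr _ a (by simpa [mul_assoc] using ha)
  have hφa' : φ a ∉ (𝒜 (σ * g⁻¹)).dualAnnihilator := fun hann =>
    ha0 (φ.map_eq_zero_iff.1 (Submodule.disjoint_def.1
      (disjoint_dualComponent_dualAnnihilator 𝒜 _) _ hφa hann))
  obtain ⟨b, hb, hba⟩ : ∃ b ∈ 𝒜 (σ * g⁻¹), φ a b ≠ 0 := by
    simpa [Submodule.mem_dualAnnihilator] using hφa'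
  refine ⟨b, hb, fun hba0 => hba ?_⟩
  rw [← one_mul b, ← hmod, hba0, map_zero, LinearMap.zero_apply]

end GradedAlgebra

/-- a finite dimensional `G`-graded algebra `A` is `σ`-graded Frobenius iff
`A_σ ≅ (A_e)*` as left `A_e`-modules (the action on `A_σ` being `a • x = a * x ∈ A_σ`,
and on `(A_e)*` being `(a • f) b = f (b * a)`) and `A` is left `σ`-faithful, i.e. for
every `g ∈ G` and nonzero `a_g ∈ A_g` there is `b ∈ A_{σg⁻¹}` with `b * a_g ≠ 0`. -/
theorem sigmaGradedFrobenius_iff_component_and_faithful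
    {k A : Type*} [Field k] [Ring A] [Algebra k A] [FiniteDimensional k A]
    {G : Type*} [Group G] [DecidableEq G]
    (𝒜 : G → Submodule k A)
    (hinternal : DirectSum.IsInternal 𝒜)
    (hone : (1 : A) ∈ 𝒜 1)
    (hmul : ∀ {g h : G}, ∀ a ∈ 𝒜 g, ∀ b ∈ 𝒜 h, a * b ∈ 𝒜 (g * h))
    (σ : G) :
    IsSigmaGradedFrobenius 𝒜 σ ↔
      ((∃ θ : ↥(𝒜 σ) ≃ₗ[k] Module.Dual k ↥(𝒜 1),
        ∀ (a : ↥(𝒜 1)) (x : ↥(𝒜 σ)) (b : ↥(𝒜 1)),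
          θ ⟨(a : A) * (x : A), by simpa using hmul (a : A) a.2 (x : A) x.2⟩ b =
          θ x ⟨(b : A) * (a : A), by simpa using hmul (b : A) b.2 (a : A) a.2⟩) ∧
      (∀ g : G, ∀ a ∈ 𝒜 g, a ≠ 0 → ∃ b ∈ 𝒜 (σ * g⁻¹), b * a ≠ 0)) := by
  let _ := hinternal.chooseDecomposition
  refine ⟨fun h => ⟨h.exists_equiv_dual_one hmul, h.isLeftSigmaFaithful⟩, ?_⟩
  rintro ⟨⟨θ, hθ⟩, hfaith⟩
  exact isSigmaGradedFrobenius_of_equiv_dual_one hone hmul θ hθ hfaith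
end

section
/- Let A be a finite dimensional G-graded algebra such that A is a Frobenius algebra and A_e is a local ring. Then there exists σ ∈ G such that A is σ-graded Frobenius. -/
theorem gradeOne_mul_mem {k A : Type*} [Field k] [Ring A] [Algebra k A]
    {G : Type*} [Group G] (𝒜 : G → Submodule k A)
    (hmul : ∀ {g h : G}, ∀ a ∈ 𝒜 g, ∀ b ∈ 𝒜 h, a * b ∈ 𝒜 (g * h))
    {a b : A} (ha : a ∈ 𝒜 1) (hb : b ∈ 𝒜 1) : a * b ∈ 𝒜 1 := by
  simpa using hmul a ha b hb

theorem gradeOne_algebraMap_mem {k A : Type*} [Field k] [Ring A] [Algebra k A]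
    {G : Type*} [Group G] (𝒜 : G → Submodule k A)
    (hone : (1 : A) ∈ 𝒜 1) (r : k) : algebraMap k A r ∈ 𝒜 1 := by
  rw [Algebra.algebraMap_eq_smul_one]
  exact Submodule.smul_mem _ r hone

/-- The identity component `A_e` of a `G`-graded algebra, as a subalgebra of `A`. -/
def gradeOneSubalgebra {k A : Type*} [Field k] [Ring A] [Algebra k A]
    {G : Type*} [Group G] (𝒜 : G → Submodule k A)
    (hone : (1 : A) ∈ 𝒜 1)
    (hmul : ∀ {g h : G}, ∀ a ∈ 𝒜 g, ∀ b ∈ 𝒜 h, a * b ∈ 𝒜 (g * h)) :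
    Subalgebra k A where
  carrier := 𝒜 1
  add_mem' := fun ha hb => add_mem ha hb
  mul_mem' := fun ha hb => gradeOne_mul_mem 𝒜 hmul ha hb
  algebraMap_mem' := fun r => gradeOne_algebraMap_mem 𝒜 hone r

open DirectSum Module

section Annihilator

variable {k A : Type*} [CommSemiring k] [Semiring A] [Algebra k A]

def rightAnnihilator (S : Submodule k A) : Submodule k A where
  carrier := {y | ∀ x ∈ S, x * y = 0}
  add_mem' hy₁ hy₂ x hx := by rw [mul_add, hy₁ x hx, hy₂ x hx, add_zero]
  zero_mem' x _ := mul_zero x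
  smul_mem' c y hy x hx := by rw [mul_smul_comm, hy x hx, smul_zero]

theorem mem_rightAnnihilator {S : Submodule k A} {y : A} :
    y ∈ rightAnnihilator S ↔ ∀ x ∈ S, x * y = 0 :=
  Iff.rfl

theorem mul_mem_rightAnnihilator {S : Submodule k A} {y : A} (hy : y ∈ rightAnnihilator S)
    (a : A) : y * a ∈ rightAnnihilator S := fun x hx => by
  rw [← mul_assoc, hy x hx, zero_mul]

theorem one_mem_rightAnnihilator_iff {S : Submodule k A} : 1 ∈ rightAnnihilator S ↔ S = ⊥ := by
  simp only [mem_rightAnnihilator, mul_one, Submodule.eq_bot_iff]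

end Annihilator

section Frobenius

variable {k A : Type*} [Field k] [Ring A] [Algebra k A]
  (φ : A ≃ₗ[k] Dual k A) (hφ : ∀ a x y : A, φ (a * x) y = φ x (y * a))
include hφ

theorem rightAnnihilator_eq_comap_dualAnnihilator {L : Submodule k A}
    (hL : ∀ a, ∀ x ∈ L, a * x ∈ L) :
    rightAnnihilator L = L.dualAnnihilator.comap φ.toLinearMap := by
  ext y
  simp only [mem_rightAnnihilator, Submodule.mem_comap, Submodule.mem_dualAnnihilator]
  refine ⟨fun hy x hx => ?_, fun hy x hx => φ.injective (LinearMap.ext fun a => ?_)⟩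
  · rw [← one_mul x, LinearEquiv.coe_coe, ← hφ, hy x hx, map_zero, LinearMap.zero_apply]
  · rw [hφ, map_zero, LinearMap.zero_apply]
    exact hy _ (hL a x hx)

/-- The double annihilator property of the Frobenius algebra `A`, for left ideals. -/
theorem dualCoannihilator_map_rightAnnihilator {L : Submodule k A}
    (hL : ∀ a, ∀ x ∈ L, a * x ∈ L) :
    ((rightAnnihilator L).map φ.toLinearMap).dualCoannihilator = L := by
  rw [rightAnnihilator_eq_comap_dualAnnihilator φ hφ hL,
    Submodule.map_comap_eq_of_surjective φ.surjective,
    Subspace.dualAnnihilator_dualCoannihilator_eq]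

end Frobenius

theorem dualCoannihilator_map_ne_bot {K V : Type*} [Field K] [AddCommGroup V] [Module K V]
    [FiniteDimensional K V] (e : V ≃ₗ[K] Dual K V) {W : Submodule K V} (hW : W ≠ ⊤) :
    (W.map e.toLinearMap).dualCoannihilator ≠ ⊥ := by
  intro h
  refine hW ((Submodule.map_eq_top_iff (e := e)).mp ?_)
  rw [← Subspace.dualCoannihilator_dualAnnihilator_eq (W := W.map e.toLinearMap), h,
    Submodule.dualAnnihilator_bot]

section Graded

variable {k A G : Type*} [CommSemiring k] [Semiring A] [Algebra k A] [DecidableEq G]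
  (𝒜 : G → Submodule k A) [Decomposition 𝒜]

theorem map_eq_zero_of_forall_decompose {M F : Type*} [AddCommMonoid M] [FunLike F A M]
    [AddMonoidHomClass F A M] (f : F) (x : A) (hx : ∀ g, f (decompose 𝒜 x g) = 0) :
    f x = 0 := by
  classical
  rw [← sum_support_decompose 𝒜 x, map_sum]
  exact Finset.sum_eq_zero fun g _ => hx g

def homogeneousForm (f : Dual k A) (σ : G) : A →ₗ[k] Dual k A :=
  LinearMap.mk₂ k (fun x y => f (decompose 𝒜 (y * x) σ))
    (fun _ _ _ => by simp only [mul_add, decompose_add, DirectSum.add_apply, Submodule.coe_add,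
      map_add])
    (fun _ _ _ => by simp only [mul_smul_comm, decompose_smul, DirectSum.smul_apply,
      Submodule.coe_smul, map_smul])
    (fun _ _ _ => by simp only [add_mul, decompose_add, DirectSum.add_apply, Submodule.coe_add,
      map_add])
    (fun _ _ _ => by simp only [smul_mul_assoc, decompose_smul, DirectSum.smul_apply,
      Submodule.coe_smul, map_smul])

theorem homogeneousForm_apply (f : Dual k A) (σ : G) (x y : A) :
    homogeneousForm 𝒜 f σ x y = f (decompose 𝒜 (y * x) σ) :=
  rfl

theorem mul_mem_ker_homogeneousForm {f : Dual k A} {σ : G} (a : A) {x : A}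
    (hx : x ∈ LinearMap.ker (homogeneousForm 𝒜 f σ)) :
    a * x ∈ LinearMap.ker (homogeneousForm 𝒜 f σ) := by
  ext y
  simpa [homogeneousForm_apply, ← mul_assoc] using LinearMap.congr_fun hx (y * a)

theorem apply_mul_eq_zero_of_forall_homogeneousForm_eq_zero {f : Dual k A} {x : A}
    (hx : ∀ σ, homogeneousForm 𝒜 f σ x = 0) (y : A) : f (y * x) = 0 :=
  map_eq_zero_of_forall_decompose 𝒜 f (y * x) fun σ => LinearMap.congr_fun (hx σ) y

variable [Group G] (hmul : ∀ {g h : G}, ∀ a ∈ 𝒜 g, ∀ b ∈ 𝒜 h, a * b ∈ 𝒜 (g * h))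
include hmul

theorem decompose_mul_of_left_mem {h : G} {a : A} (ha : a ∈ 𝒜 h) (x : A) (g : G) :
    (decompose 𝒜 (a * x) g : A) = a * decompose 𝒜 x (h⁻¹ * g) := by
  induction x using Decomposition.inductionOn 𝒜 with
  | zero => simp
  | @homogeneous i m =>
    by_cases hg : h * i = g
    · rw [decompose_of_mem_same 𝒜 (hg ▸ hmul a ha m m.2), ← hg, inv_mul_cancel_left,
        decompose_coe, of_eq_same]
    · rw [decompose_of_mem_ne 𝒜 (hmul a ha m m.2) hg,
        decompose_of_mem_ne 𝒜 m.2 (by rintro rfl; simp at hg), mul_zero]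
  | add x y hx hy =>
    simp only [mul_add, decompose_add, DirectSum.add_apply, Submodule.coe_add, hx, hy]

theorem decompose_mul_of_right_mem {d : G} {b : A} (hb : b ∈ 𝒜 d) (x : A) (g : G) :
    (decompose 𝒜 (x * b) g : A) = decompose 𝒜 x (g * d⁻¹) * b := by
  induction x using Decomposition.inductionOn 𝒜 with
  | zero => simp
  | @homogeneous i m =>
    by_cases hg : i * d = g
    · rw [decompose_of_mem_same 𝒜 (hg ▸ hmul m m.2 b hb), ← hg, mul_inv_cancel_right,
        decompose_coe, of_eq_same]
    · rw [decompose_of_mem_ne 𝒜 (hmul m m.2 b hb) hg,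
        decompose_of_mem_ne 𝒜 m.2 (by rintro rfl; simp at hg), zero_mul]
  | add x y hx hy =>
    simp only [add_mul, decompose_add, DirectSum.add_apply, Submodule.coe_add, hx, hy]

/-- Both sides equal `π_{g d⁻¹} x * π_d y`. -/
theorem decompose_mul_decompose (x y : A) (g d : G) :
    (decompose 𝒜 (x * decompose 𝒜 y d) g : A) =
      decompose 𝒜 (decompose 𝒜 x (g * d⁻¹) * y) g := by
  rw [decompose_mul_of_right_mem 𝒜 hmul (decompose 𝒜 y d).2,
    decompose_mul_of_left_mem 𝒜 hmul (decompose 𝒜 x (g * d⁻¹)).2, mul_inv_rev, inv_inv,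
    inv_mul_cancel_right]

theorem isHomogeneous_rightAnnihilator {S : Submodule k A} (hS : SetLike.IsHomogeneous 𝒜 S) :
    SetLike.IsHomogeneous 𝒜 (rightAnnihilator S) := by
  intro d y hy x hx
  refine map_eq_zero_of_forall_decompose 𝒜 (AddMonoidHom.id A) (x * decompose 𝒜 y d)
    fun g => ?_
  rw [AddMonoidHom.id_apply, decompose_mul_decompose 𝒜 hmul, hy _ (hS _ hx)]
  simp

theorem isHomogeneous_ker_homogeneousForm (f : Dual k A) (σ : G) :
    SetLike.IsHomogeneous 𝒜 (LinearMap.ker (homogeneousForm 𝒜 f σ)) := by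
  intro d x hx
  ext y
  rw [LinearMap.zero_apply, homogeneousForm_apply, decompose_mul_decompose 𝒜 hmul,
    ← homogeneousForm_apply, LinearMap.mem_ker.mp hx, LinearMap.zero_apply]

end Graded

section Local

variable {k A G : Type*} [Field k] [Ring A] [Algebra k A] [Group G] [DecidableEq G]
  {𝒜 : G → Submodule k A} [Decomposition 𝒜] (hone : (1 : A) ∈ 𝒜 1)
  (hmul : ∀ {g h : G}, ∀ a ∈ 𝒜 g, ∀ b ∈ 𝒜 h, a * b ∈ 𝒜 (g * h))

/-- The degree-`e` component of a graded right ideal not containing `1` has no units of `A_e`,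
and in a local ring the nonunits are closed under addition. -/
theorem one_notMem_iSup_of_isLocalRing [IsLocalRing (gradeOneSubalgebra 𝒜 hone hmul)]
    {ι : Type*} {W : ι → Submodule k A} (hW : ∀ i, SetLike.IsHomogeneous 𝒜 (W i))
    (hWmul : ∀ i, ∀ w ∈ W i, ∀ a, w * a ∈ W i) (hW1 : ∀ i, (1 : A) ∉ W i) :
    (1 : A) ∉ ⨆ i, W i := by
  let B := gradeOneSubalgebra 𝒜 hone hmul
  let π : A →+ B := AddMonoidHom.mk' (fun x => ⟨decompose 𝒜 x 1, (decompose 𝒜 x 1).2⟩)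
    fun x y => Subtype.ext (by simp)
  have hπ : ∀ x ∈ ⨆ i, W i, π x ∈ nonunits B := by
    intro x hx
    refine Submodule.iSup_induction W (motive := fun x => π x ∈ nonunits B) hx ?_ ?_ ?_
    · intro i w hw hunit
      obtain ⟨c, hc⟩ := hunit.exists_right_inv
      have hc' : (decompose 𝒜 w 1 : A) * c = 1 := congrArg Subtype.val hc
      exact hW1 i (hc' ▸ hWmul i _ (hW i 1 hw) c)
    · simpa only [map_zero] using zero_mem_nonunits.mpr zero_ne_one
    · intro x y hx hy
      simpa only [map_add] using IsLocalRing.nonunits_add hx hy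
  have hπ1 : π 1 = 1 := Subtype.ext (decompose_of_mem_same 𝒜 hone)
  exact fun h1 => one_notMem_nonunits (hπ1 ▸ hπ 1 h1)

theorem exists_ker_homogeneousForm_eq_bot [FiniteDimensional k A]
    [IsLocalRing (gradeOneSubalgebra 𝒜 hone hmul)] (φ : A ≃ₗ[k] Dual k A)
    (hφ : ∀ a x y : A, φ (a * x) y = φ x (y * a)) :
    ∃ σ, LinearMap.ker (homogeneousForm 𝒜 (φ 1) σ) = ⊥ := by
  by_contra! hker
  have hJ : ⨆ σ, rightAnnihilator (LinearMap.ker (homogeneousForm 𝒜 (φ 1) σ)) ≠ ⊤ := by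
    intro htop
    refine one_notMem_iSup_of_isLocalRing hone hmul ?_ ?_ ?_ (htop ▸ Submodule.mem_top)
    · exact fun σ => isHomogeneous_rightAnnihilator 𝒜 hmul
        (isHomogeneous_ker_homogeneousForm 𝒜 hmul _ σ)
    · exact fun _ _ hw => mul_mem_rightAnnihilator hw
    · exact fun σ => one_mem_rightAnnihilator_iff.not.mpr (hker σ)
  obtain ⟨x, hx, hx0⟩ :=
    Submodule.exists_mem_ne_zero_of_ne_bot (dualCoannihilator_map_ne_bot φ hJ)
  have hxL : ∀ σ, x ∈ LinearMap.ker (homogeneousForm 𝒜 (φ 1) σ) := fun σ => by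
    rw [← dualCoannihilator_map_rightAnnihilator φ hφ
      fun a _ => mul_mem_ker_homogeneousForm 𝒜 a]
    refine Submodule.dualCoannihilator_anti (Submodule.map_mono ?_) hx
    exact le_iSup (fun σ => rightAnnihilator (LinearMap.ker (homogeneousForm 𝒜 (φ 1) σ))) σ
  refine hx0 (φ.injective (LinearMap.ext fun y => ?_))
  rw [map_zero, LinearMap.zero_apply, ← mul_one x, hφ]
  exact apply_mul_eq_zero_of_forall_homogeneousForm_eq_zero 𝒜
    (fun σ => LinearMap.mem_ker.mp (hxL σ)) y

include hmul in
theorem isSigmaGradedFrobenius_of_injective [FiniteDimensional k A] {f : Dual k A} {σ : G}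
    (hf : Function.Injective (homogeneousForm 𝒜 f σ)) : IsSigmaGradedFrobenius 𝒜 σ := by
  refine ⟨LinearMap.linearEquivOfInjective _ hf Subspace.dual_finrank_eq.symm, ?_, ?_⟩
  · intro a x y
    simp only [LinearMap.linearEquivOfInjective_apply, homogeneousForm_apply, mul_assoc]
  · intro g x hx h hh y hy
    have hdeg : h * (g * σ) ≠ σ := fun heq =>
      hh (mul_eq_one_iff_eq_inv.mp (mul_eq_right.mp (by rwa [mul_assoc])))
    rw [LinearMap.linearEquivOfInjective_apply, homogeneousForm_apply,
      decompose_of_mem_ne 𝒜 (hmul y hy x hx) hdeg, map_zero]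

end Local

/-- if a finite dimensional `G`-graded algebra `A` is a Frobenius algebra
(`A ≅ A*` as left `A`-modules) and `A_e` is a local ring, then `A` is `σ`-graded
Frobenius for some `σ ∈ G`. -/
theorem frobenius_local_exists_sigmaGradedFrobenius
    {k A : Type*} [Field k] [Ring A] [Algebra k A] [FiniteDimensional k A]
    {G : Type*} [Group G] [DecidableEq G]
    (𝒜 : G → Submodule k A)
    (hinternal : DirectSum.IsInternal 𝒜)
    (hone : (1 : A) ∈ 𝒜 1)
    (hmul : ∀ {g h : G}, ∀ a ∈ 𝒜 g, ∀ b ∈ 𝒜 h, a * b ∈ 𝒜 (g * h))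
    (hFrob : ∃ φ : A ≃ₗ[k] Module.Dual k A, ∀ a x y : A, φ (a * x) y = φ x (y * a))
    (hlocal : IsLocalRing ↥(gradeOneSubalgebra 𝒜 hone hmul)) :
    ∃ σ : G, IsSigmaGradedFrobenius 𝒜 σ := by
  let := hinternal.chooseDecomposition
  obtain ⟨φ, hφ⟩ := hFrob
  obtain ⟨σ, hσ⟩ := exists_ker_homogeneousForm_eq_bot hone hmul φ hφ
  exact ⟨σ, isSigmaGradedFrobenius_of_injective hmul (LinearMap.ker_eq_bot.mp hσ)⟩
end

section
/- Let A be an algebra graded by a finite group G, and let M, N be finite dimensional graded left A-modules with M graded indecomposable. If M ≅ N as (ungraded) A-modules, then M ≅ N(σ) as graded A-modules for some σ ∈ G. -/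
/-!
An ungraded isomorphism `f : M ≃ N` splits into homogeneous components `f_σ : M → N(σ)`, and
likewise `f⁻¹`. The degree-preserving `A`-endomorphisms `u_σ = (f⁻¹)_{σ⁻¹} ∘ f_σ` of `M` sum to
`(f⁻¹ ∘ f)_1 = 1`. By Fitting's lemma applied to the graded summands `ker w^n ⊕ range w^n`, every
degree-preserving endomorphism of the graded indecomposable `M` is invertible or nilpotent, so these
endomorphisms form a local ring and some `u_σ` is invertible. Then `f_σ` is injective, hence
bijective since `M` is Artinian, and it is the required graded isomorphism `M ≅ N(σ)`.
-/

open DirectSum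

namespace DirectSum.IsInternal

variable {k ι M : Type*} [Semiring k] [DecidableEq ι] [AddCommMonoid M] [Module k M]
  {ℳ : ι → Submodule k M} (hM : IsInternal ℳ)

noncomputable def proj (i : ι) : M →ₗ[k] M :=
  (ℳ i).subtype ∘ₗ DFinsupp.lapply i ∘ₗ
    (LinearEquiv.ofBijective (coeLinearMap ℳ) hM).symm.toLinearMap

lemma proj_apply (i : ι) (m : M) :
    hM.proj i m = (LinearEquiv.ofBijective (coeLinearMap ℳ) hM).symm m i :=
  rfl

lemma proj_mem (i : ι) (m : M) : hM.proj i m ∈ ℳ i :=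
  Subtype.coe_prop _

lemma proj_of_mem {i j : ι} {m : M} (hm : m ∈ ℳ j) :
    hM.proj i m = if i = j then m else 0 := by
  rcases eq_or_ne i j with rfl | h
  · simp [proj_apply, hM.ofBijective_coeLinearMap_of_mem hm]
  · simp [proj_apply, hM.ofBijective_coeLinearMap_of_mem_ne (Ne.symm h) hm, h]

lemma proj_proj (i j : ι) (m : M) :
    hM.proj i (hM.proj j m) = if i = j then hM.proj j m else 0 :=
  hM.proj_of_mem (hM.proj_mem j m)

variable [Fintype ι]

lemma sum_proj (m : M) : ∑ i, hM.proj i m = m := by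
  set e := LinearEquiv.ofBijective (coeLinearMap ℳ) hM
  calc ∑ i, hM.proj i m = coeLinearMap ℳ (∑ i, of (fun i => ℳ i) i (e.symm m i)) := by
        simp [proj_apply, e]
    _ = m := by rw [sum_univ_of]; exact e.apply_symm_apply m

lemma proj_apply_comm {F : Type*} [FunLike F M M] [AddMonoidHomClass F M M] {w : F}
    (hw : ∀ i, ∀ m ∈ ℳ i, w m ∈ ℳ i) (i : ι) (m : M) :
    hM.proj i (w m) = w (hM.proj i m) := by
  conv_lhs => rw [← hM.sum_proj m]
  simp [map_sum, hM.proj_of_mem (hw _ _ (hM.proj_mem _ m))]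

end DirectSum.IsInternal

section Component

variable {k A G M N : Type*} [Semiring k] [Semiring A] [Module k A] [Group G] [Fintype G]
  [DecidableEq G] [AddCommMonoid M] [Module k M] [Module A M] [AddCommMonoid N] [Module k N]
  [Module A N] {𝒜 : G → Submodule k A} {ℳ : G → Submodule k M} {𝒩 : G → Submodule k N}

lemma DirectSum.IsInternal.proj_smul_of_mem (hM : IsInternal ℳ)
    (hMact : ∀ {g h : G}, ∀ a ∈ 𝒜 g, ∀ m ∈ ℳ h, a • m ∈ ℳ (g * h))
    {h : G} {a : A} (ha : a ∈ 𝒜 h) (g : G) (m : M) :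
    hM.proj g (a • m) = a • hM.proj (h⁻¹ * g) m := by
  conv_lhs => rw [← hM.sum_proj m]
  simp [Finset.smul_sum, hM.proj_of_mem (hMact a ha _ (hM.proj_mem _ m)),
    ← inv_mul_eq_iff_eq_mul]

lemma DirectSum.IsInternal.sum_proj_mul_left (hM : IsInternal ℳ) (g : G) (m : M) :
    ∑ σ, hM.proj (g * σ) m = m :=
  (Equiv.sum_comp (Equiv.mulLeft g) (hM.proj · m)).trans (hM.sum_proj m)

variable (hM : IsInternal ℳ) (hN : IsInternal 𝒩)

lemma sum_proj_mul_map_smul (hA : IsInternal 𝒜)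
    (hMact : ∀ {g h : G}, ∀ a ∈ 𝒜 g, ∀ m ∈ ℳ h, a • m ∈ ℳ (g * h))
    (hNact : ∀ {g h : G}, ∀ a ∈ 𝒜 g, ∀ n ∈ 𝒩 h, a • n ∈ 𝒩 (g * h))
    (f : M →ₗ[A] N) (σ : G) (a : A) (m : M) :
    ∑ g, hN.proj (g * σ) (f (hM.proj g (a • m))) = a • ∑ g, hN.proj (g * σ) (f (hM.proj g m)) := by
  have homogeneous : ∀ h, ∀ a ∈ 𝒜 h,
      ∑ g, hN.proj (g * σ) (f (hM.proj g (a • m))) =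
        a • ∑ g, hN.proj (g * σ) (f (hM.proj g m)) := by
    intro h a ha
    rw [Finset.smul_sum]
    refine Fintype.sum_equiv (Equiv.mulLeft h⁻¹) _ _ fun g => ?_
    rw [hM.proj_smul_of_mem hMact ha, f.map_smul, hN.proj_smul_of_mem hNact ha,
      Equiv.coe_mulLeft, mul_assoc]
  conv_lhs => rw [← hA.sum_proj a]
  conv_rhs => rw [← hA.sum_proj a]
  simp only [Finset.sum_smul, map_sum]
  rw [Finset.sum_comm]
  exact Finset.sum_congr rfl fun h _ => homogeneous h _ (hA.proj_mem h a)

/-- The homogeneous component of degree `σ` of `f`, a graded map `M → N(σ)`. -/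
noncomputable def component (hA : IsInternal 𝒜)
    (hMact : ∀ {g h : G}, ∀ a ∈ 𝒜 g, ∀ m ∈ ℳ h, a • m ∈ ℳ (g * h))
    (hNact : ∀ {g h : G}, ∀ a ∈ 𝒜 g, ∀ n ∈ 𝒩 h, a • n ∈ 𝒩 (g * h))
    (f : M →ₗ[A] N) (σ : G) : M →ₗ[A] N where
  toFun m := ∑ g, hN.proj (g * σ) (f (hM.proj g m))
  map_add' m m' := by simp [Finset.sum_add_distrib]
  map_smul' := sum_proj_mul_map_smul hM hN hA hMact hNact f σ

variable {hM hN} {hA : IsInternal 𝒜}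
  {hMact : ∀ {g h : G}, ∀ a ∈ 𝒜 g, ∀ m ∈ ℳ h, a • m ∈ ℳ (g * h)}
  {hNact : ∀ {g h : G}, ∀ a ∈ 𝒜 g, ∀ n ∈ 𝒩 h, a • n ∈ 𝒩 (g * h)}

lemma component_apply (f : M →ₗ[A] N) (σ : G) (m : M) :
    component hM hN hA hMact hNact f σ m = ∑ g, hN.proj (g * σ) (f (hM.proj g m)) :=
  rfl

lemma component_apply_of_mem (f : M →ₗ[A] N) (σ : G) {g : G} {m : M} (hm : m ∈ ℳ g) :
    component hM hN hA hMact hNact f σ m = hN.proj (g * σ) (f m) := by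
  simp [component_apply, hM.proj_of_mem hm, apply_ite]

lemma component_mem (f : M →ₗ[A] N) (σ : G) {g : G} {m : M} (hm : m ∈ ℳ g) :
    component hM hN hA hMact hNact f σ m ∈ 𝒩 (g * σ) := by
  rw [component_apply_of_mem f σ hm]
  exact hN.proj_mem _ _

lemma proj_component (f : M →ₗ[A] N) (σ h : G) (m : M) :
    hN.proj h (component hM hN hA hMact hNact f σ m) = hN.proj h (f (hM.proj (h * σ⁻¹) m)) := by
  simp [component_apply, hN.proj_proj, ← mul_inv_eq_iff_eq_mul]

lemma component_id_one : component hM hM hA hMact hMact LinearMap.id 1 = LinearMap.id := by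
  ext m
  simp [component_apply, hM.proj_proj, hM.sum_proj]

lemma sum_component_comp_component (f : M →ₗ[A] N) (f' : N →ₗ[A] M) :
    ∑ σ, component hN hM hA hNact hMact f' σ⁻¹ ∘ₗ component hM hN hA hMact hNact f σ =
      component hM hM hA hMact hMact (f' ∘ₗ f) 1 := by
  ext m
  calc (∑ σ, component hN hM hA hNact hMact f' σ⁻¹ ∘ₗ component hM hN hA hMact hNact f σ) m
      = ∑ σ, ∑ g, hM.proj g (f' (hN.proj (g * σ) (f (hM.proj g m)))) := by
        simp only [LinearMap.sum_apply, LinearMap.comp_apply]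
        refine Finset.sum_congr rfl fun σ _ => ?_
        rw [component_apply]
        refine Fintype.sum_equiv (Equiv.mulRight σ⁻¹) _ _ fun h => ?_
        rw [proj_component, Equiv.coe_mulRight, inv_mul_cancel_right]
    _ = ∑ g, hM.proj g (f' (∑ σ, hN.proj (g * σ) (f (hM.proj g m)))) := by
        rw [Finset.sum_comm]
        simp only [map_sum]
    _ = component hM hM hA hMact hMact (f' ∘ₗ f) 1 m := by
        rw [component_apply]
        refine Finset.sum_congr rfl fun g _ => ?_
        rw [mul_one, hN.sum_proj_mul_left, LinearMap.comp_apply]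

end Component

theorem exists_isUnit_of_isUnit_sum_of_isUnit_or_isNilpotent {R ι : Type*} [Ring R]
    (hR : ∀ x : R, IsUnit x ∨ IsNilpotent x) {s : Finset ι} (hs : s.Nonempty) {f : ι → R}
    (h : IsUnit (∑ i ∈ s, f i)) : ∃ i ∈ s, IsUnit (f i) := by
  rcases subsingleton_or_nontrivial R with _ | _
  · obtain ⟨i, hi⟩ := hs
    exact ⟨i, hi, isUnit_of_subsingleton _⟩
  · have : IsLocalRing R := .of_isUnit_or_isUnit_one_sub_self fun x =>
      (hR x).imp_right IsNilpotent.isUnit_one_sub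
    exact IsLocalRing.exists_of_isUnit_sum h

section GradedEnd

variable {k A ι M : Type*} [Ring k] [Ring A] [AddCommGroup M] [Module k M] [Module A M]

def gradedEnd (A : Type*) [Ring A] [Module A M] (ℳ : ι → Submodule k M) :
    Subring (Module.End A M) where
  carrier := {w | ∀ i, ∀ m ∈ ℳ i, w m ∈ ℳ i}
  mul_mem' hv hw i m hm := hv i _ (hw i m hm)
  one_mem' _ _ hm := hm
  add_mem' hv hw i m hm := add_mem (hv i m hm) (hw i m hm)
  zero_mem' _ _ _ := zero_mem _
  neg_mem' hw i m hm := neg_mem (hw i m hm)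

def IsGradedSubmodule (ℳ : ι → Submodule k M) (P : Submodule k M) : Prop :=
  P = ⨆ i, P ⊓ ℳ i

def IsGradedIndecomposable (A : Type*) [Ring A] [Module A M] [SMul k A] [IsScalarTower k A M]
    (ℳ : ι → Submodule k M) : Prop :=
  ∀ P Q : Submodule A M, IsGradedSubmodule ℳ (P.restrictScalars k) →
    IsGradedSubmodule ℳ (Q.restrictScalars k) → IsCompl P Q → P = ⊥ ∨ Q = ⊥

variable [DecidableEq ι] [Fintype ι] {ℳ : ι → Submodule k M}

lemma isGradedSubmodule_of_proj_mem (hM : IsInternal ℳ) {P : Submodule k M}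
    (hP : ∀ i, ∀ m ∈ P, hM.proj i m ∈ P) : IsGradedSubmodule ℳ P := by
  refine le_antisymm (fun m hm => ?_) (iSup_le fun _ => inf_le_left)
  rw [← hM.sum_proj m]
  exact Submodule.sum_mem _ fun i _ =>
    Submodule.mem_iSup_of_mem i ⟨hP i m hm, hM.proj_mem i m⟩

namespace gradedEnd

lemma proj_apply_comm (hM : IsInternal ℳ) (w : gradedEnd A ℳ) (i : ι) (m : M) :
    hM.proj i ((w : Module.End A M) m) = (w : Module.End A M) (hM.proj i m) :=
  hM.proj_apply_comm w.2 i m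

lemma isUnit_iff_bijective (hM : IsInternal ℳ) (w : gradedEnd A ℳ) :
    IsUnit w ↔ Function.Bijective (w : Module.End A M) := by
  refine ⟨fun hw => Module.End.isUnit_iff _ |>.mp (hw.map (gradedEnd A ℳ).subtype), fun hw => ?_⟩
  let e := LinearEquiv.ofBijective (w : Module.End A M) hw
  have he : ∀ m, (w : Module.End A M) (e.symm m) = m := e.apply_symm_apply
  have hinv : (e.symm : Module.End A M) ∈ gradedEnd A ℳ := fun i m hm => by
    have : (w : Module.End A M) (hM.proj i (e.symm m)) = (w : Module.End A M) (e.symm m) := by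
      rw [← proj_apply_comm hM, he, hM.proj_of_mem hm, if_pos rfl]
    exact hw.injective this ▸ hM.proj_mem i _
  exact ⟨⟨w, ⟨_, hinv⟩, Subtype.ext (LinearMap.ext he),
    Subtype.ext (LinearMap.ext e.symm_apply_apply)⟩, rfl⟩

variable [SMul k A] [IsScalarTower k A M]

lemma isGradedSubmodule_ker (hM : IsInternal ℳ) (w : gradedEnd A ℳ) :
    IsGradedSubmodule ℳ ((LinearMap.ker (w : Module.End A M)).restrictScalars k) :=
  isGradedSubmodule_of_proj_mem hM fun i m hm => by
    simp only [Submodule.restrictScalars_mem, LinearMap.mem_ker] at hm ⊢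
    rw [← proj_apply_comm hM, hm, map_zero]

lemma isGradedSubmodule_range (hM : IsInternal ℳ) (w : gradedEnd A ℳ) :
    IsGradedSubmodule ℳ ((LinearMap.range (w : Module.End A M)).restrictScalars k) :=
  isGradedSubmodule_of_proj_mem hM fun i m hm => by
    obtain ⟨m', rfl⟩ := hm
    exact ⟨hM.proj i m', (proj_apply_comm hM w i m').symm⟩

theorem isUnit_or_isNilpotent [IsArtinian A M] [IsNoetherian A M] (hM : IsInternal ℳ)
    (hindec : IsGradedIndecomposable A ℳ) (w : gradedEnd A ℳ) : IsUnit w ∨ IsNilpotent w := by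
  obtain ⟨n, hcompl, hn⟩ := ((w : Module.End A M).eventually_isCompl_ker_pow_range_pow.and
    (Filter.eventually_ge_atTop 1)).exists
  rw [← SubmonoidClass.coe_pow] at hcompl
  rcases hindec _ _ (isGradedSubmodule_ker hM _) (isGradedSubmodule_range hM _) hcompl with h | h
  · left
    rw [← isUnit_pow_iff (n := n) (by omega), isUnit_iff_bijective hM]
    exact IsArtinian.bijective_of_injective_endomorphism _ (LinearMap.ker_eq_bot.mp h)
  · exact .inr ⟨n, Subtype.ext (LinearMap.range_eq_bot.mp h)⟩

end gradedEnd

end GradedEnd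

theorem gradedIndecomposable_iso_suspension_general
    {k A : Type*} [Field k] [Ring A] [Algebra k A]
    {G : Type*} [Group G] [Finite G] [DecidableEq G]
    (𝒜 : G → Submodule k A)
    (hinternal : DirectSum.IsInternal 𝒜)
    {M N : Type*}
    [AddCommGroup M] [Module k M] [Module A M] [IsScalarTower k A M]
    [AddCommGroup N] [Module k N] [Module A N] [IsScalarTower k A N]
    [FiniteDimensional k M]
    (ℳ : G → Submodule k M) (𝒩 : G → Submodule k N)
    (hMinternal : DirectSum.IsInternal ℳ) (hNinternal : DirectSum.IsInternal 𝒩)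
    (hMact : ∀ {g h : G}, ∀ a ∈ 𝒜 g, ∀ m ∈ ℳ h, a • m ∈ ℳ (g * h))
    (hNact : ∀ {g h : G}, ∀ a ∈ 𝒜 g, ∀ n ∈ 𝒩 h, a • n ∈ 𝒩 (g * h))
    (hindec : ∀ P Q : Submodule A M,
      (P.restrictScalars k = ⨆ g : G, P.restrictScalars k ⊓ ℳ g) →
      (Q.restrictScalars k = ⨆ g : G, Q.restrictScalars k ⊓ ℳ g) →
      IsCompl P Q → P = ⊥ ∨ Q = ⊥)
    (hiso : Nonempty (M ≃ₗ[A] N)) :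
    ∃ (σ : G) (e : M ≃ₗ[A] N), ∀ g : G, ∀ m ∈ ℳ g, e m ∈ 𝒩 (g * σ) := by
  have := Fintype.ofFinite G
  have : IsNoetherian A M := isNoetherian_of_tower k inferInstance
  have : IsArtinian A M := isArtinian_of_tower k inferInstance
  obtain ⟨f⟩ := hiso
  let F := component hMinternal hNinternal hinternal hMact hNact f.toLinearMap
  let F' := component hNinternal hMinternal hinternal hNact hMact f.symm.toLinearMap
  let u (σ : G) : gradedEnd A ℳ := ⟨F' σ⁻¹ ∘ₗ F σ, fun g _ hm => by
    simpa using component_mem _ σ⁻¹ (component_mem _ σ hm)⟩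
  have hsum : ∑ σ, u σ = 1 := Subtype.ext <| by
    rw [AddSubmonoidClass.coe_finsetSum, sum_component_comp_component, f.symm_comp,
      component_id_one]
    rfl
  obtain ⟨σ, -, hσ⟩ := exists_isUnit_of_isUnit_sum_of_isUnit_or_isNilpotent
    (gradedEnd.isUnit_or_isNilpotent hMinternal hindec) Finset.univ_nonempty (hsum ▸ isUnit_one)
  have hinj : Function.Injective (F σ) :=
    .of_comp (f := F' σ⁻¹) ((gradedEnd.isUnit_iff_bijective hMinternal (u σ)).mp hσ).injective
  have hbij : Function.Bijective (F σ) := (EquivLike.comp_bijective _ f.symm).mp <|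
    IsArtinian.bijective_of_injective_endomorphism (f.symm.toLinearMap ∘ₗ F σ)
      ((EquivLike.comp_injective _ f.symm).mpr hinj)
  exact ⟨σ, .ofBijective (F σ) hbij, fun g _ hm => (component_mem _ σ hm : F σ _ ∈ _)⟩

/-- let `A` be an algebra graded by a finite group `G`, and let `M`, `N`
be finite dimensional graded left `A`-modules with `M` graded indecomposable (no
nontrivial decomposition into two graded submodules).  If `M ≅ N` as ungraded
`A`-modules, then `M ≅ N(σ)` as graded `A`-modules for some `σ ∈ G`, where
`N(σ)_g = N_{gσ}`. -/
theorem gradedIndecomposable_iso_suspension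
    {k A : Type*} [Field k] [Ring A] [Algebra k A]
    {G : Type*} [Group G] [Finite G] [DecidableEq G]
    (𝒜 : G → Submodule k A)
    (hinternal : DirectSum.IsInternal 𝒜)
    (hone : (1 : A) ∈ 𝒜 1)
    (hmul : ∀ {g h : G}, ∀ a ∈ 𝒜 g, ∀ b ∈ 𝒜 h, a * b ∈ 𝒜 (g * h))
    {M N : Type*}
    [AddCommGroup M] [Module k M] [Module A M] [IsScalarTower k A M]
    [AddCommGroup N] [Module k N] [Module A N] [IsScalarTower k A N]
    [FiniteDimensional k M] [FiniteDimensional k N]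
    (ℳ : G → Submodule k M) (𝒩 : G → Submodule k N)
    (hMinternal : DirectSum.IsInternal ℳ) (hNinternal : DirectSum.IsInternal 𝒩)
    (hMact : ∀ {g h : G}, ∀ a ∈ 𝒜 g, ∀ m ∈ ℳ h, a • m ∈ ℳ (g * h))
    (hNact : ∀ {g h : G}, ∀ a ∈ 𝒜 g, ∀ n ∈ 𝒩 h, a • n ∈ 𝒩 (g * h))
    (hindec : ∀ P Q : Submodule A M,
      (P.restrictScalars k = ⨆ g : G, P.restrictScalars k ⊓ ℳ g) →
      (Q.restrictScalars k = ⨆ g : G, Q.restrictScalars k ⊓ ℳ g) →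
      IsCompl P Q → P = ⊥ ∨ Q = ⊥)
    (hiso : Nonempty (M ≃ₗ[A] N)) :
    ∃ (σ : G) (e : M ≃ₗ[A] N), ∀ g : G, ∀ m ∈ ℳ g, e m ∈ 𝒩 (g * σ) :=
  gradedIndecomposable_iso_suspension_general 𝒜 hinternal ℳ 𝒩 hMinternal hNinternal hMact hNact
    hindec hiso
end
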